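/- arXiv:2007.01607 — 6 statements merged into one kernel-verified Lean document; each statement's English description precedes it below -/
import Mathlib

section
/- The equation δ² = (1−δ)/(1+δ), equivalently δ³ + δ² + δ − 1 = 0, has a unique solution δ* in (0,1). Moreover, for every δ ∈ (0, δ*) one has Φ_δ(0) > G_δ(0); in particular Φ_δ does not coincide identically with G_δ on (−1,0]. -/
/-!
For the symmetric gap `α = 0` everything is explicit: `c(0) = 0` by symmetry, and
`log (√(1 - ξ²) + √(δ² - ξ²))` is an antiderivative of `-ξ / √((1 - ξ²)(δ² - ξ²))`, so
`G_{0,δ}(0) = ½ log ((1 + δ) / (1 - δ))`. Writing `t = √((1 + δ) / (1 - δ))`, this beats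
`G_δ(0) = log (y + √(y² - 1))`, `y = δ / (1 - δ)`, as soon as `δ t < 1`, i.e. `δ³ + δ² + δ < 1`,
i.e. `δ < δ*` (for `δ ≤ 1/2` simply `G_δ(0) = 0`).

For `G_{0,δ}(0) ≤ Φ_δ(0)` the supremum over `α` has to be finite. Since `c(α)` is the mean of `ξ`
for the weight `w = ((1 - ξ²)(ξ - a)(b - ξ))^{-1/2}`, `G_{α,δ}(x) ≤ ∫ₐᵇ (ξ - a) w`, and
`(ξ - a) w(ξ) ≤ ((1 - δ)(b - ξ))^{-1/2}` bounds this by `2 √(2δ) / √(1 - δ)` uniformly in `α`.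
-/

open MeasureTheory Set Filter Real

/-- `Mn n x₀ E`: sup of `|P(x₀)|` over real polynomials of degree at most `n`
bounded by 1 on `E`. -/
noncomputable def Mn (n : ℕ) (x₀ : ℝ) (E : Set ℝ) : ℝ :=
  sSup {y | ∃ P : Polynomial ℝ, P.natDegree ≤ n ∧ (∀ x ∈ E, |P.eval x| ≤ 1) ∧
    y = |P.eval x₀|}

/-- `Ln n δ x₀`: sup of `Mn n x₀ E` over closed subsets `E ⊆ [-1,1]` with
Lebesgue measure at least `2 - 2δ`. -/
noncomputable def Ln (n : ℕ) (δ : ℝ) (x₀ : ℝ) : ℝ :=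
  sSup {y | ∃ E : Set ℝ, IsClosed E ∧ E ⊆ Icc (-1 : ℝ) 1 ∧
    2 - 2 * δ ≤ (volume E).toReal ∧ y = Mn n x₀ E}

/-- The two-interval set `E(α,δ) = [-1,1] \ (α-δ, α+δ)`. -/
def Eset (α δ : ℝ) : Set ℝ := Icc (-1 : ℝ) 1 \ Ioo (α - δ) (α + δ)

/-- The critical point `c(α)` of the Green function of `ℂ̄ \ E(α,δ)` in the gap. -/
noncomputable def cpt (δ α : ℝ) : ℝ :=
  (∫ ξ in (α - δ)..(α + δ), ξ / Real.sqrt ((1 - ξ^2) * (ξ - (α - δ)) * ((α + δ) - ξ))) /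
  (∫ ξ in (α - δ)..(α + δ), 1 / Real.sqrt ((1 - ξ^2) * (ξ - (α - δ)) * ((α + δ) - ξ)))

/-- The Green function `G_{α,δ}(x)` of `ℂ̄ \ E(α,δ)` with pole at `∞`,
in the gap `(α-δ, α+δ)`. -/
noncomputable def Gtwo (δ α x : ℝ) : ℝ :=
  ∫ ξ in (α - δ)..x, (cpt δ α - ξ) / Real.sqrt ((1 - ξ^2) * (ξ - (α - δ)) * ((α + δ) - ξ))

/-- The Green function `G_δ(x)` of `ℂ̄ \ [-1+2δ, 1]` with pole at `∞`. -/
noncomputable def Gone (δ x : ℝ) : ℝ :=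
  if x ≤ -1 + 2 * δ then
    Real.log ((δ - x) / (1 - δ) + Real.sqrt (((δ - x) / (1 - δ))^2 - 1))
  else 0

/-- The upper envelope `Φ_δ(x)`; `sSup ∅ = 0` in `ℝ`. -/
noncomputable def Phi (δ x : ℝ) : ℝ :=
  max (Gone δ x)
    (sSup {y | ∃ α ∈ Ioc (δ - 1) (0 : ℝ), x ∈ Ioo (α - δ) (α + δ) ∧ y = Gtwo δ α x})

/-- `Cheb n y = ((y+√(y²−1))ⁿ + (y−√(y²−1))ⁿ)/2`, the Chebyshev polynomial of the
first kind for `y ≥ 1`. -/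
noncomputable def Cheb (n : ℕ) (y : ℝ) : ℝ :=
  ((y + Real.sqrt (y^2 - 1))^n + (y - Real.sqrt (y^2 - 1))^n) / 2

open intervalIntegral

theorem hasDerivAt_two_mul_sqrt {x : ℝ} (hx : 0 < x) :
    HasDerivAt (fun y => 2 * √y) (√x)⁻¹ x := by
  have h := (Real.hasDerivAt_sqrt hx.ne').const_mul 2
  rwa [mul_one_div, div_mul_cancel_left₀ two_ne_zero] at h

theorem intervalIntegrable_inv_sqrt {c : ℝ} (hc : 0 ≤ c) :
    IntervalIntegrable (fun x => (√x)⁻¹) volume 0 c := by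
  refine intervalIntegrable_deriv_of_nonneg (g := fun y => 2 * √y) (by fun_prop)
    (fun x hx => hasDerivAt_two_mul_sqrt ?_) (fun x _ => by positivity)
  simp only [hc, min_eq_left, max_eq_right, mem_Ioo] at hx
  exact hx.1

theorem integral_inv_sqrt {c : ℝ} (hc : 0 ≤ c) : ∫ x in 0..c, (√x)⁻¹ = 2 * √c := by
  rw [integral_eq_sub_of_hasDerivAt_of_le hc (by fun_prop)
    (fun x hx => hasDerivAt_two_mul_sqrt hx.1) (intervalIntegrable_inv_sqrt hc)]
  simp

theorem intervalIntegrable_inv_sqrt_sub_left {a b : ℝ} (hab : a ≤ b) :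
    IntervalIntegrable (fun x => (√(x - a))⁻¹) volume a b := by
  simpa using (intervalIntegrable_inv_sqrt (sub_nonneg.2 hab)).comp_sub_right a

theorem intervalIntegrable_inv_sqrt_sub_right {a b : ℝ} (hab : a ≤ b) :
    IntervalIntegrable (fun x => (√(b - x))⁻¹) volume a b := by
  simpa using ((intervalIntegrable_inv_sqrt (sub_nonneg.2 hab)).comp_sub_left b).symm

theorem integral_inv_sqrt_sub_right {a b : ℝ} (hab : a ≤ b) :
    ∫ x in a..b, (√(b - x))⁻¹ = 2 * √(b - a) := by
  rw [integral_comp_sub_left (fun x => (√x)⁻¹), sub_self, integral_inv_sqrt (sub_nonneg.2 hab)]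

theorem inv_sqrt_mul_le {u v : ℝ} (hu : 0 < u) (hv : 0 < v) :
    (√(u * v))⁻¹ ≤ ((√u)⁻¹ + (√v)⁻¹) / √(u + v) := by
  have hsu := Real.sqrt_pos.2 hu
  have hsv := Real.sqrt_pos.2 hv
  have hadd : √(u + v) ≤ √u + √v := by
    rw [Real.sqrt_le_left (by positivity)]
    nlinarith [Real.sq_sqrt hu.le, Real.sq_sqrt hv.le]
  rw [Real.sqrt_mul hu.le, inv_add_inv hsu.ne' hsv.ne', div_div, le_div_iff₀ (by positivity),
    inv_mul_cancel_left₀ (by positivity)]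
  exact hadd

theorem integral_mean_sub_mul_le {w : ℝ → ℝ} {a b x : ℝ} (hax : a ≤ x) (hxb : x ≤ b)
    (hw : ∀ ξ ∈ Icc a b, 0 ≤ w ξ) (hwi : IntervalIntegrable w volume a b)
    (hpos : 0 < ∫ ξ in a..b, w ξ) :
    ∫ ξ in a..x, ((∫ η in a..b, η * w η) / (∫ η in a..b, w η) - ξ) * w ξ ≤
      ∫ ξ in a..b, (ξ - a) * w ξ := by
  set W := ∫ η in a..b, w η
  set m := (∫ η in a..b, η * w η) / W
  have hmoment : ∫ ξ in a..b, (ξ - a) * w ξ = (m - a) * W := by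
    simp only [sub_mul]
    rw [intervalIntegral.integral_sub (hwi.continuousOn_mul (g := fun ξ => ξ) (by fun_prop))
      (hwi.const_mul a), intervalIntegral.integral_const_mul, div_mul_cancel₀ _ hpos.ne']
  have hma : 0 ≤ m - a := by
    refine (mul_nonneg_iff_of_pos_right hpos).1 (hmoment ▸ integral_nonneg (hax.trans hxb) ?_)
    exact fun ξ hξ => mul_nonneg (by linarith [hξ.1]) (hw ξ hξ)
  have hsub : uIcc a x ⊆ uIcc a b := uIcc_subset_uIcc_left (mem_uIcc_of_le hax hxb)
  calc ∫ ξ in a..x, (m - ξ) * w ξ ≤ ∫ ξ in a..x, (m - a) * w ξ :=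
        integral_mono_on hax ((hwi.continuousOn_mul (by fun_prop)).mono_set hsub)
          ((hwi.const_mul _).mono_set hsub)
          fun ξ hξ =>
            mul_le_mul_of_nonneg_right (by linarith [hξ.1]) (hw ξ ⟨hξ.1, hξ.2.trans hxb⟩)
    _ = (m - a) * ∫ ξ in a..x, w ξ := intervalIntegral.integral_const_mul _ _
    _ ≤ (m - a) * W := by
        refine mul_le_mul_of_nonneg_left (integral_mono_interval le_rfl hax hxb ?_ hwi) hma
        exact (ae_restrict_iff' measurableSet_Ioc).2
          (Eventually.of_forall fun ξ hξ => hw ξ (Ioc_subset_Icc_self hξ))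
    _ = ∫ ξ in a..b, (ξ - a) * w ξ := hmoment.symm

noncomputable def gapWeight (a b ξ : ℝ) : ℝ := (√((1 - ξ ^ 2) * (ξ - a) * (b - ξ)))⁻¹

section GapWeight

variable {a b : ℝ}

theorem gapWeight_nonneg (a b ξ : ℝ) : 0 ≤ gapWeight a b ξ := by
  unfold gapWeight
  positivity

theorem gapWeight_pos (ha : -1 < a) (hb : b < 1) {ξ : ℝ} (hξ : ξ ∈ Ioo a b) :
    0 < gapWeight a b ξ := by
  obtain ⟨hξa, hξb⟩ := hξ
  have h1 : 0 < 1 - ξ ^ 2 := by nlinarith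
  have h2 : 0 < ξ - a := by linarith
  have h3 : 0 < b - ξ := by linarith
  unfold gapWeight
  positivity

theorem gapWeight_le (ha : -1 < a) (hb : b < 1) {ξ : ℝ} (hξ : ξ ∈ Ioo a b) :
    gapWeight a b ξ ≤
      (√((1 - b) * (1 + a)))⁻¹ * (((√(ξ - a))⁻¹ + (√(b - ξ))⁻¹) / √(b - a)) := by
  obtain ⟨hξa, hξb⟩ := hξ
  have hu : 0 < ξ - a := by linarith
  have hv : 0 < b - ξ := by linarith
  have hK : 0 < (1 - b) * (1 + a) := by nlinarith
  calc gapWeight a b ξ ≤ (√((1 - b) * (1 + a) * ((ξ - a) * (b - ξ))))⁻¹ := by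
        refine inv_anti₀ (Real.sqrt_pos.2 (by positivity)) (Real.sqrt_le_sqrt ?_)
        rw [← mul_assoc]
        gcongr
        nlinarith
    _ = (√((1 - b) * (1 + a)))⁻¹ * (√((ξ - a) * (b - ξ)))⁻¹ := by
        rw [Real.sqrt_mul hK.le, mul_inv]
    _ ≤ _ := by
        gcongr
        simpa using inv_sqrt_mul_le hu hv

theorem intervalIntegrable_gapWeight (ha : -1 < a) (hab : a < b) (hb : b < 1) :
    IntervalIntegrable (gapWeight a b) volume a b := by
  refine ((((intervalIntegrable_inv_sqrt_sub_left hab.le).add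
    (intervalIntegrable_inv_sqrt_sub_right hab.le)).div_const √(b - a)).const_mul
    (√((1 - b) * (1 + a)))⁻¹).mono_fun'
    (by unfold gapWeight; fun_prop) ?_
  rw [uIoc_of_le hab.le]
  refine (ae_restrict_iff' measurableSet_Ioc).2 (Eventually.of_forall fun ξ hξ => ?_)
  dsimp only
  rw [Real.norm_of_nonneg (gapWeight_nonneg a b ξ)]
  rcases hξ.2.lt_or_eq with hξb | rfl
  · exact gapWeight_le ha hb ⟨hξ.1, hξb⟩
  · simp only [gapWeight, sub_self, mul_zero, Real.sqrt_zero, inv_zero]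
    positivity

theorem integral_gapWeight_pos (ha : -1 < a) (hab : a < b) (hb : b < 1) :
    0 < ∫ ξ in a..b, gapWeight a b ξ :=
  intervalIntegral_pos_of_pos_on (intervalIntegrable_gapWeight ha hab hb)
    (fun _ hξ => gapWeight_pos ha hb hξ) hab

theorem sub_mul_gapWeight_le {β : ℝ} (ha : -1 ≤ a) (hbβ : b ≤ β) (hβ : β < 1) {ξ : ℝ}
    (hξ : ξ ∈ Icc a b) : (ξ - a) * gapWeight a b ξ ≤ (√(1 - β))⁻¹ * (√(b - ξ))⁻¹ := by
  obtain ⟨hξa, hξb⟩ := hξ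
  rcases hξa.eq_or_lt with rfl | hu
  · simp only [sub_self, zero_mul]
    positivity
  rcases hξb.lt_or_eq with hv | rfl
  swap
  · simp only [gapWeight, sub_self, mul_zero, Real.sqrt_zero, inv_zero]
    positivity
  rw [← sub_pos] at hu hv
  have hβξ : (1 - β) * (ξ - a) ≤ (1 - ξ) * (1 + ξ) :=
    mul_le_mul (by linarith) (by linarith) hu.le (by linarith)
  calc (ξ - a) * gapWeight a b ξ
      = (√((1 - ξ ^ 2) * (ξ - a) * (b - ξ) / (ξ - a) ^ 2))⁻¹ := by
        rw [Real.sqrt_div' _ (by positivity), Real.sqrt_sq hu.le, inv_div, div_eq_mul_inv]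
        rfl
    _ ≤ (√((1 - β) * (b - ξ)))⁻¹ := by
        refine inv_anti₀ (Real.sqrt_pos.2 (by nlinarith)) (Real.sqrt_le_sqrt ?_)
        rw [le_div_iff₀ (by positivity)]
        nlinarith [mul_le_mul_of_nonneg_right hβξ (mul_nonneg hu.le hv.le)]
    _ = (√(1 - β))⁻¹ * (√(b - ξ))⁻¹ := by
        rw [Real.sqrt_mul (by linarith), mul_inv]

theorem integral_sub_mul_gapWeight_le {β : ℝ} (ha : -1 < a) (hab : a < b) (hbβ : b ≤ β)
    (hβ : β < 1) : ∫ ξ in a..b, (ξ - a) * gapWeight a b ξ ≤ 2 * √(b - a) / √(1 - β) :=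
  calc ∫ ξ in a..b, (ξ - a) * gapWeight a b ξ
      ≤ ∫ ξ in a..b, (√(1 - β))⁻¹ * (√(b - ξ))⁻¹ :=
        integral_mono_on hab.le
          ((intervalIntegrable_gapWeight ha hab (by linarith)).continuousOn_mul (by fun_prop))
          ((intervalIntegrable_inv_sqrt_sub_right hab.le).const_mul _)
          (fun _ hξ => sub_mul_gapWeight_le ha.le hbβ hβ hξ)
    _ = 2 * √(b - a) / √(1 - β) := by
        rw [intervalIntegral.integral_const_mul, integral_inv_sqrt_sub_right hab.le]
        ring

end GapWeight

theorem cpt_eq (δ α : ℝ) :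
    cpt δ α = (∫ ξ in (α - δ)..(α + δ), ξ * gapWeight (α - δ) (α + δ) ξ) /
      ∫ ξ in (α - δ)..(α + δ), gapWeight (α - δ) (α + δ) ξ := by
  simp only [cpt, gapWeight, div_eq_mul_inv, one_mul]

theorem Gtwo_eq (δ α x : ℝ) :
    Gtwo δ α x = ∫ ξ in (α - δ)..x, (cpt δ α - ξ) * gapWeight (α - δ) (α + δ) ξ := by
  simp only [Gtwo, gapWeight, div_eq_mul_inv]

theorem Gtwo_le {δ α x : ℝ} (hδ : 0 < δ) (hα : δ - 1 < α) (hα0 : α ≤ 0)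
    (hx : x ∈ Icc (α - δ) (α + δ)) : Gtwo δ α x ≤ 2 * √(2 * δ) / √(1 - δ) := by
  have ha : -1 < α - δ := by linarith
  have hab : α - δ < α + δ := by linarith
  have hb : α + δ < 1 := by linarith
  rw [Gtwo_eq, cpt_eq]
  calc _ ≤ ∫ ξ in (α - δ)..(α + δ), (ξ - (α - δ)) * gapWeight (α - δ) (α + δ) ξ :=
        integral_mean_sub_mul_le hx.1 hx.2 (fun ξ _ => gapWeight_nonneg _ _ ξ)
          (intervalIntegrable_gapWeight ha hab hb) (integral_gapWeight_pos ha hab hb)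
    _ ≤ 2 * √(α + δ - (α - δ)) / √(1 - δ) :=
        integral_sub_mul_gapWeight_le ha hab (by linarith) (by linarith)
    _ = 2 * √(2 * δ) / √(1 - δ) := by ring_nf

theorem Gtwo_le_Phi {δ α x : ℝ} (hδ : 0 < δ) (hα : α ∈ Ioc (δ - 1) 0)
    (hx : x ∈ Ioo (α - δ) (α + δ)) : Gtwo δ α x ≤ Phi δ x := by
  refine le_trans ?_ (le_max_right _ _)
  refine le_csSup ⟨2 * √(2 * δ) / √(1 - δ), ?_⟩ ⟨α, hα, hx, rfl⟩
  rintro _ ⟨β, hβ, hxβ, rfl⟩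
  exact Gtwo_le hδ hβ.1 hβ.2 (Ioo_subset_Icc_self hxβ)

theorem cpt_zero (δ : ℝ) : cpt δ 0 = 0 := by
  have hodd := integral_comp_neg (a := -δ) (b := δ) fun ξ => ξ * gapWeight (-δ) δ ξ
  have hw : ∀ ξ, gapWeight (-δ) δ (-ξ) = gapWeight (-δ) δ ξ := fun ξ => by
    simp only [gapWeight]
    ring_nf
  simp only [hw, neg_mul, intervalIntegral.integral_neg, neg_neg] at hodd
  rw [cpt_eq, zero_sub, zero_add, div_eq_zero_iff]
  left
  linarith

theorem hasDerivAt_log_sqrt_add_sqrt {δ ξ : ℝ} (hδ : δ < 1) (hξ : ξ ∈ Ioo (-δ) δ) :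
    HasDerivAt (fun t => log (√(1 - t ^ 2) + √(δ ^ 2 - t ^ 2))) (-ξ * gapWeight (-δ) δ ξ) ξ := by
  obtain ⟨hξl, hξr⟩ := hξ
  have hA : 0 < 1 - ξ ^ 2 := by nlinarith
  have hB : 0 < δ ^ 2 - ξ ^ 2 := by nlinarith
  have hsA := Real.sqrt_pos.2 hA
  have hsB := Real.sqrt_pos.2 hB
  have hderiv (c : ℝ) (hc : 0 < c - ξ ^ 2) :
      HasDerivAt (fun t => √(c - t ^ 2)) (-ξ / √(c - ξ ^ 2)) ξ := by
    convert ((hasDerivAt_pow 2 ξ).const_sub c).sqrt hc.ne' using 1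
    field_simp
    ring
  convert ((hderiv 1 hA).fun_add (hderiv _ hB)).log (add_pos hsA hsB).ne' using 1
  rw [gapWeight, show (1 - ξ ^ 2) * (ξ - -δ) * (δ - ξ) = (1 - ξ ^ 2) * (δ ^ 2 - ξ ^ 2) by ring,
    Real.sqrt_mul hA.le]
  field_simp
  ring

theorem Gtwo_zero_zero {δ : ℝ} (hδ : 0 < δ) (hδ1 : δ < 1) :
    Gtwo δ 0 0 = log ((1 + δ) / (1 - δ)) / 2 := by
  have hint : IntervalIntegrable (fun ξ => -ξ * gapWeight (-δ) δ ξ) volume (-δ) 0 :=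
    ((intervalIntegrable_gapWeight (by linarith) (by linarith) hδ1).continuousOn_mul
      (by fun_prop)).mono_set (uIcc_subset_uIcc_left (by simp [hδ.le]))
  have hcont : ContinuousOn (fun t => log (√(1 - t ^ 2) + √(δ ^ 2 - t ^ 2))) (Icc (-δ) 0) := by
    refine ContinuousOn.log (by fun_prop) fun t ht => ?_
    have : 0 < √(1 - t ^ 2) := Real.sqrt_pos.2 (by nlinarith [ht.1, ht.2])
    positivity
  rw [Gtwo_eq, cpt_zero]
  simp only [zero_sub, zero_add]
  rw [integral_eq_sub_of_hasDerivAt_of_le (by linarith) hcont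
    (fun ξ hξ => hasDerivAt_log_sqrt_add_sqrt hδ1 ⟨hξ.1, hξ.2.trans hδ⟩) hint]
  have h1δ : 0 < 1 - δ := by linarith
  norm_num [Real.sqrt_sq hδ.le]
  rw [Real.log_sqrt (by nlinarith), show 1 - δ ^ 2 = (1 + δ) * (1 - δ) by ring,
    Real.log_mul (by linarith) h1δ.ne', Real.log_div (by linarith) h1δ.ne']
  ring

theorem add_sqrt_sq_sub_one_lt {y t : ℝ} (hyt : y < t) (h : 2 * t * y < t ^ 2 + 1) :
    y + √(y ^ 2 - 1) < t := by
  have : √(y ^ 2 - 1) < t - y := (Real.sqrt_lt' (by linarith)).2 (by nlinarith)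
  linarith

theorem Gone_zero_lt {δ : ℝ} (hδ : 0 < δ) (hcubic : δ ^ 3 + δ ^ 2 + δ < 1) :
    Gone δ 0 < log ((1 + δ) / (1 - δ)) / 2 := by
  have h1δ : 0 < 1 - δ := by nlinarith
  have hu : 1 < (1 + δ) / (1 - δ) := by rw [lt_div_iff₀ h1δ]; linarith
  unfold Gone
  split_ifs with hδ2
  swap
  · exact half_pos (Real.log_pos hu)
  rw [sub_zero, ← Real.log_sqrt (by positivity)]
  set t := √((1 + δ) / (1 - δ))
  have ht : t ^ 2 = (1 + δ) / (1 - δ) := Real.sq_sqrt (by positivity)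
  have ht' : t ^ 2 * (1 - δ) = 1 + δ := by rw [ht]; field_simp
  have htpos : 0 < t := Real.sqrt_pos.2 (by positivity)
  have hδt : δ * t < 1 := by
    refine abs_lt_of_sq_lt_sq' ?_ zero_le_one |>.2
    rw [mul_pow, ht, mul_div_assoc', one_pow, div_lt_one h1δ]
    nlinarith
  have hy : 1 ≤ δ / (1 - δ) := by rw [le_div_iff₀ h1δ]; linarith
  refine Real.log_lt_log (by positivity) (add_sqrt_sq_sub_one_lt ?_ ?_)
  · rw [div_lt_iff₀ h1δ]
    nlinarith [ht', hδt, htpos]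
  · rw [ht]
    field_simp
    nlinarith

theorem strictMono_cubic : StrictMono fun x : ℝ => x ^ 3 + x ^ 2 + x := by
  intro x y hxy
  have : 0 < x ^ 2 + x * y + y ^ 2 + x + y + 1 := by
    nlinarith [sq_nonneg (x + y + 1), sq_nonneg x, sq_nonneg y]
  nlinarith [mul_pos (sub_pos.2 hxy) this]

theorem sq_eq_div_iff_cubic {d : ℝ} (hd : 1 + d ≠ 0) :
    d ^ 2 = (1 - d) / (1 + d) ↔ d ^ 3 + d ^ 2 + d - 1 = 0 := by
  rw [eq_div_iff hd]
  constructor <;> intro h <;> linear_combination h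

/-- the equation `δ² = (1−δ)/(1+δ)`, equivalently `δ³+δ²+δ−1 = 0`,
has a unique solution `δ*` in `(0,1)`, and for `δ < δ*` the envelope `Φ_δ` does not
coincide with `G_δ`: indeed `Φ_δ(0) > G_δ(0)`. -/
theorem envelope_strictly_bigger_for_small_delta :
    (∀ d ∈ Ioo (0 : ℝ) 1, d^2 = (1 - d) / (1 + d) ↔ d^3 + d^2 + d - 1 = 0) ∧
    (∃! d : ℝ, d ∈ Ioo (0 : ℝ) 1 ∧ d^2 = (1 - d) / (1 + d)) ∧
    (∀ d : ℝ, d ∈ Ioo (0 : ℝ) 1 → d^2 = (1 - d) / (1 + d) →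
      ∀ δ ∈ Ioo (0 : ℝ) d, Phi δ 0 > Gone δ 0 ∧
        ¬(∀ x ∈ Ioc (-1 : ℝ) (0 : ℝ), Phi δ x = Gone δ x)) := by
  have hiff : ∀ d ∈ Ioo (0 : ℝ) 1, d ^ 2 = (1 - d) / (1 + d) ↔ d ^ 3 + d ^ 2 + d - 1 = 0 :=
    fun d hd => sq_eq_div_iff_cubic (by linarith [hd.1])
  refine ⟨hiff, ?_, fun d hd hdeq δ ⟨hδ, hδd⟩ => ?_⟩
  · obtain ⟨d, hd, hroot⟩ := intermediate_value_Ioo zero_le_one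
      (f := fun x : ℝ => x ^ 3 + x ^ 2 + x - 1) (by fun_prop)
      (show (0 : ℝ) ∈ Ioo _ _ by norm_num)
    refine ⟨d, ⟨hd, (hiff d hd).2 hroot⟩, fun e ⟨he, heq⟩ => strictMono_cubic.injective ?_⟩
    linarith [(hiff e he).1 heq]
  · have hcubic : δ ^ 3 + δ ^ 2 + δ < 1 := by
      linarith [strictMono_cubic hδd, (hiff d hd).1 hdeq]
    have hδ1 : δ < 1 := hδd.trans hd.2
    have hlt : Gone δ 0 < Phi δ 0 :=
      calc Gone δ 0 < log ((1 + δ) / (1 - δ)) / 2 := Gone_zero_lt hδ hcubic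
        _ = Gtwo δ 0 0 := (Gtwo_zero_zero hδ hδ1).symm
        _ ≤ Phi δ 0 := Gtwo_le_Phi hδ ⟨by linarith, le_rfl⟩ ⟨by linarith, by linarith⟩
    exact ⟨hlt, fun h => hlt.ne' (h 0 ⟨by norm_num, le_rfl⟩)⟩
end

section
/- For every n ∈ ℕ and δ ∈ (0,1), the Remez constant satisfies sup_{x₀ ∈ [−1,1]} L_{n,δ}(x₀) = 𝔗ₙ((1+δ)/(1−δ)): every polynomial P of degree at most n with |P| ≤ 1 on some closed set E ⊆ [−1,1] of Lebesgue measure |E| ≥ 2−2δ satisfies sup_{x ∈ [−1,1]} |P(x)| ≤ 𝔗ₙ((1+δ)/(1−δ)), and equality is attained at x₀ = −1 by the Remez polynomial R_{n,δ}(x) = 𝔗ₙ((δ−x)/(1−δ)) with E = [−1+2δ,1]. -/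
/-!
Let `E ⊆ [a, b]` be compact with `|E| = μ > 0` and `|P| ≤ 1` on `E`. Pick points `t j ∈ E` at
which the cumulative measure `x ↦ |E ∩ (-∞, x]|` takes the same values as it does for the
interval `[b - μ, b]` at the extremal points `y j` of the Chebyshev polynomial transported to that
interval. Then `a ≤ t j ≤ y j` and `|y j - y i| ≤ |t j - t i|`, so comparing the Lagrange
expansion of `P` at the nodes `t j` term by term with that of the transported Chebyshev polynomial
at the `y j` (whose basis polynomials alternate in sign left of the nodes) gives
`|P a| ≤ T_n (2 (b - a) / μ - 1)`.

For `x ∈ [-1, 1]`, one of `E ∩ [-1, x]` and `E ∩ [x, 1]` fills at least the fraction `1 - δ` of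
its interval, and `x` is an endpoint of that interval; this gives `|P x| ≤ T_n ((1 + δ) / (1 - δ))`.
-/

open MeasureTheory Set Filter Real

open Polynomial Polynomial.Chebyshev

lemma cheb_eq_eval_T {y : ℝ} (hy : 1 ≤ y) (n : ℕ) : Cheb n y = (T ℝ n).eval y := by
  conv_rhs => rw [← cosh_arcosh hy]
  rw [T_real_cosh, Int.cast_natCast, cosh_eq, exp_nat_mul, exp_neg, exp_nat_mul, ← inv_pow,
    exp_arcosh hy, add_sqrt_self_sq_sub_one_inv hy, Cheb]

lemma monotoneOn_eval_T (n : ℕ) : MonotoneOn (fun x => (T ℝ n).eval x) (Ici 1) := by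
  intro x hx y hy hxy
  have hx0 : 0 ≤ arcosh x := arcosh_nonneg hx
  have hxy' : arcosh x ≤ arcosh y := (arcosh_le_arcosh (by linarith [mem_Ici.1 hx])
    (by linarith [mem_Ici.1 hy])).2 hxy
  dsimp only
  rw [← cosh_arcosh hx, ← cosh_arcosh hy, T_real_cosh, T_real_cosh, cosh_le_cosh,
    abs_of_nonneg (by positivity [hx0]), abs_of_nonneg (by positivity [hx0.trans hxy'])]
  gcongr

lemma natDegree_T_comp_affine_le (n : ℕ) (c d : ℝ) :
    ((T ℝ n).comp (C c * X + C d)).natDegree ≤ n := by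
  refine natDegree_comp_le.trans ?_
  rw [natDegree_T, Int.natAbs_natCast]
  exact (Nat.mul_le_mul_left n (natDegree_linear_le (a := c) (b := d))).trans (mul_one n).le

section Lagrange

open Finset

lemma degree_lt_card_range {P : ℝ[X]} {n : ℕ} (hP : P.natDegree ≤ n) :
    P.degree < #(range (n + 1)) := by
  rw [card_range]
  exact (degree_le_of_natDegree_le hP).trans_lt (by exact_mod_cast Nat.lt_succ_self n)

variable {ι : Type*} [DecidableEq ι]

lemma eval_basis_eq_prod {F : Type*} [Field F] (s : Finset ι) (v : ι → F) (j : ι) (x : F) :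
    (Lagrange.basis s v j).eval x = ∏ i ∈ s.erase j, (x - v i) / (v j - v i) := by
  simp [Lagrange.basis, Lagrange.basisDivisor, eval_prod, div_eq_inv_mul]

lemma abs_eval_le_sum_abs_eval_basis {s : Finset ι} {v : ι → ℝ} (hv : Set.InjOn v s)
    {P : ℝ[X]} (hP : P.degree < #s) (hPv : ∀ i ∈ s, |P.eval (v i)| ≤ 1) (x : ℝ) :
    |P.eval x| ≤ ∑ i ∈ s, |(Lagrange.basis s v i).eval x| := by
  rw [Lagrange.eq_interpolate hv hP, Lagrange.interpolate_apply, eval_finsetSum]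
  refine (abs_sum_le_sum_abs _ _).trans (sum_le_sum fun i hi => ?_)
  rw [eval_mul, eval_C, abs_mul]
  exact mul_le_of_le_one_left (abs_nonneg _) (hPv i hi)

lemma abs_eval_basis_le {s : Finset ι} {t y : ι → ℝ} {j : ι} {x : ℝ} (hy : Set.InjOn y s)
    (hj : j ∈ s) (hx : ∀ i ∈ s, |x - t i| ≤ |x - y i|)
    (hty : ∀ i ∈ s, |y j - y i| ≤ |t j - t i|) :
    |(Lagrange.basis s t j).eval x| ≤ |(Lagrange.basis s y j).eval x| := by
  rw [eval_basis_eq_prod, eval_basis_eq_prod, abs_prod, abs_prod]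
  refine prod_le_prod (fun _ _ => abs_nonneg _) fun i hi => ?_
  obtain ⟨hij, hi⟩ := mem_erase.1 hi
  have hyji : 0 < |y j - y i| := abs_pos.2 (sub_ne_zero.2 fun h => hij (hy hi hj h.symm))
  rw [abs_div, abs_div]
  exact div_le_div₀ (abs_nonneg _) (hx i hi) hyji (hty i hi)

lemma abs_eval_basis_eq_neg_one_pow_mul {n j : ℕ} {y : ℕ → ℝ} {x : ℝ}
    (hy : StrictMonoOn y (Finset.range (n + 1))) (hx : ∀ i ∈ range (n + 1), x ≤ y i)
    (hj : j ∈ range (n + 1)) :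
    |(Lagrange.basis (range (n + 1)) y j).eval x| =
      (-1) ^ j * (Lagrange.basis (range (n + 1)) y j).eval x := by
  set S := (range (n + 1)).erase j
  have hsign : ∀ i ∈ S, (x - y i) / (y j - y i) =
      (if i < j then -1 else 1) * |(x - y i) / (y j - y i)| := by
    intro i hi
    obtain ⟨hij, hi⟩ := mem_erase.1 hi
    have hxi : x - y i ≤ 0 := sub_nonpos.2 (hx i hi)
    rcases lt_or_gt_of_ne hij with h | h
    · have hji : 0 ≤ y j - y i := sub_nonneg.2 (hy hi hj h).le
      rw [if_pos h, abs_of_nonpos (div_nonpos_of_nonpos_of_nonneg hxi hji)]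
      ring
    · have hji : y j - y i ≤ 0 := sub_nonpos.2 (hy hj hi h).le
      rw [if_neg h.not_gt, abs_of_nonneg (div_nonneg_of_nonpos hxi hji)]
      ring
  have hcard : #(S.filter (· < j)) = j := by
    convert card_range j using 2
    ext i
    simp only [S, mem_filter, mem_erase, Finset.mem_range]
    have := Finset.mem_range.1 hj
    omega
  have hprod : ∏ i ∈ S, (x - y i) / (y j - y i) =
      (-1) ^ j * ∏ i ∈ S, |(x - y i) / (y j - y i)| := by
    rw [prod_congr rfl hsign, prod_mul_distrib, prod_ite, prod_const, prod_const, one_pow,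
      mul_one, hcard]
  rw [eval_basis_eq_prod, hprod, ← mul_assoc, ← mul_pow, neg_one_mul, neg_neg, one_pow, one_mul,
    abs_mul, abs_pow, abs_neg, abs_one, one_pow, one_mul,
    abs_of_nonneg (prod_nonneg fun _ _ => abs_nonneg _)]

lemma sum_abs_eval_basis_eq_eval {n : ℕ} {y : ℕ → ℝ} {x : ℝ} {Q : ℝ[X]}
    (hy : StrictMonoOn y (Finset.range (n + 1))) (hx : ∀ i ∈ range (n + 1), x ≤ y i)
    (hQ : Q.natDegree ≤ n) (hQy : ∀ j ∈ range (n + 1), Q.eval (y j) = (-1) ^ j) :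
    ∑ j ∈ range (n + 1), |(Lagrange.basis (range (n + 1)) y j).eval x| = Q.eval x := by
  rw [Lagrange.eq_interpolate hy.injOn (degree_lt_card_range hQ), Lagrange.interpolate_apply,
    eval_finsetSum]
  refine sum_congr rfl fun j hj => ?_
  rw [eval_mul, eval_C, hQy j hj, abs_eval_basis_eq_neg_one_pow_mul hy hx hj]

theorem abs_eval_le_eval_of_nodes {n : ℕ} {t y : ℕ → ℝ} {P Q : ℝ[X]} {a : ℝ}
    (hy : StrictMonoOn y (Finset.range (n + 1))) (hP : P.natDegree ≤ n) (hQ : Q.natDegree ≤ n)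
    (hPt : ∀ j ∈ range (n + 1), |P.eval (t j)| ≤ 1)
    (hQy : ∀ j ∈ range (n + 1), Q.eval (y j) = (-1) ^ j)
    (hat : ∀ j ∈ range (n + 1), a ≤ t j) (hty : ∀ j ∈ range (n + 1), t j ≤ y j)
    (hgap : ∀ i ∈ range (n + 1), ∀ j ∈ range (n + 1), |y j - y i| ≤ |t j - t i|) :
    |P.eval a| ≤ Q.eval a := by
  have ht : Set.InjOn t (Finset.range (n + 1)) := fun i hi j hj hij => by
    have := hgap i hi j hj
    rw [hij, sub_self, abs_zero, abs_nonpos_iff, sub_eq_zero] at this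
    exact hy.injOn hi hj this.symm
  have hclose : ∀ i ∈ range (n + 1), |a - t i| ≤ |a - y i| := fun i hi => by
    rw [abs_of_nonpos (by linarith [hat i hi]), abs_of_nonpos (by linarith [hat i hi, hty i hi])]
    linarith [hty i hi]
  calc |P.eval a| ≤ ∑ j ∈ range (n + 1), |(Lagrange.basis (range (n + 1)) t j).eval a| :=
        abs_eval_le_sum_abs_eval_basis ht (degree_lt_card_range hP) hPt a
    _ ≤ ∑ j ∈ range (n + 1), |(Lagrange.basis (range (n + 1)) y j).eval a| :=
        sum_le_sum fun j hj => abs_eval_basis_le hy.injOn hj hclose fun i hi => hgap i hi j hj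
    _ = Q.eval a :=
        sum_abs_eval_basis_eq_eval hy (fun i hi => (hat i hi).trans (hty i hi)) hQ hQy

end Lagrange

noncomputable def cumMeasure (E : Set ℝ) (t : ℝ) : ℝ := volume.real (E ∩ Iic t)

section cumMeasure

variable {E : Set ℝ}

lemma cumMeasure_mono (hE : volume E ≠ ⊤) : Monotone (cumMeasure E) := fun _ _ hst =>
  measureReal_mono (inter_subset_inter_right _ (Iic_subset_Iic.2 hst))
    (measure_ne_top_of_subset inter_subset_left hE)

lemma cumMeasure_le_add (hE : volume E ≠ ⊤) {s t : ℝ} (hst : s ≤ t) :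
    cumMeasure E t ≤ cumMeasure E s + (t - s) := by
  have hsub : E ∩ Iic t ⊆ (E ∩ Iic s) ∪ Ioc s t := fun x ⟨hxE, hxt⟩ =>
    (le_or_gt x s).imp (fun hxs => ⟨hxE, hxs⟩) fun hxs => ⟨hxs, hxt⟩
  calc cumMeasure E t ≤ volume.real ((E ∩ Iic s) ∪ Ioc s t) :=
        measureReal_mono hsub (measure_union_ne_top
          (measure_ne_top_of_subset inter_subset_left hE) measure_Ioc_lt_top.ne)
    _ ≤ cumMeasure E s + (t - s) := by
        rw [← Real.volume_real_Ioc_of_le hst]; exact measureReal_union_le _ _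

lemma lipschitzWith_cumMeasure (hE : volume E ≠ ⊤) : LipschitzWith 1 (cumMeasure E) := by
  refine LipschitzWith.of_le_add fun s t => ?_
  rw [Real.dist_eq]
  rcases le_total s t with hst | hts
  · linarith [cumMeasure_mono hE hst, abs_nonneg (s - t)]
  · linarith [cumMeasure_le_add hE hts, le_abs_self (s - t)]

lemma cumMeasure_of_subset_Iic {b : ℝ} (hEb : E ⊆ Iic b) : cumMeasure E b = volume.real E := by
  rw [cumMeasure, inter_eq_left.2 hEb]

lemma cumMeasure_eq_zero (hE : BddBelow E) {t : ℝ} (ht : t ≤ sInf E) : cumMeasure E t = 0 := by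
  have hsub : E ∩ Iic t ⊆ {sInf E} := fun x ⟨hxE, hxt⟩ =>
    le_antisymm (hxt.trans ht) (csInf_le hE hxE)
  rw [cumMeasure, measureReal_def, measure_mono_null hsub (measure_singleton _),
    ENNReal.toReal_zero]

/-- The least point where the cumulative measure reaches `m` lies in `E`, because off the
closed set `E` the cumulative measure is locally constant. -/
lemma exists_mem_cumMeasure_eq (hE : IsCompact E) (hne : E.Nonempty) {m : ℝ}
    (hm : m ∈ Icc 0 (volume.real E)) : ∃ t ∈ E, cumMeasure E t = m := by
  have hfin : volume E ≠ ⊤ := hE.measure_lt_top.ne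
  rcases hm.1.eq_or_lt with rfl | hm0
  · exact ⟨sInf E, hE.sInf_mem hne, cumMeasure_eq_zero hE.bddBelow le_rfl⟩
  set A := {u | m ≤ cumMeasure E u}
  have hAne : A.Nonempty := ⟨sSup E, by
    rw [mem_ofPred_eq, cumMeasure_of_subset_Iic fun x hx => le_csSup hE.bddAbove hx]; exact hm.2⟩
  have hAbdd : BddBelow A := ⟨sInf E, fun u hu => not_lt.1 fun hlt =>
    hm0.not_ge (hu.trans (cumMeasure_eq_zero hE.bddBelow hlt.le).le)⟩
  set t := sInf A
  have htA : t ∈ A :=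
    (isClosed_le continuous_const (lipschitzWith_cumMeasure hfin).continuous).csInf_mem hAne hAbdd
  have hbelow : ∀ u < t, cumMeasure E u < m := fun u hu =>
    not_le.1 fun h => (csInf_le hAbdd h).not_gt hu
  have hle : cumMeasure E t ≤ m := le_of_forall_pos_lt_add fun ε hε => by
    linarith [cumMeasure_le_add hfin (by linarith : t - ε ≤ t), hbelow (t - ε) (by linarith)]
  refine ⟨t, by_contra fun htE => ?_, le_antisymm hle htA⟩
  obtain ⟨ε, hε, hball⟩ := Metric.isOpen_iff.1 hE.isClosed.isOpen_compl t htE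
  have hgap : E ∩ Iic t ⊆ E ∩ Iic (t - ε / 2) := by
    rintro x ⟨hxE, hxt : x ≤ t⟩
    refine ⟨hxE, mem_Iic.2 <| not_lt.1 fun hx => hball ?_ hxE⟩
    rw [Metric.mem_ball, Real.dist_eq, abs_of_nonpos (by linarith)]
    linarith
  have : cumMeasure E t ≤ cumMeasure E (t - ε / 2) :=
    measureReal_mono hgap (measure_ne_top_of_subset inter_subset_left hfin)
  linarith [hbelow (t - ε / 2) (by linarith), show m ≤ cumMeasure E t from htA]

end cumMeasure

lemma volume_real_le_of_subset_Icc {S : Set ℝ} {a b : ℝ} (h : S ⊆ Icc a b) (hab : a ≤ b) :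
    volume.real S ≤ b - a :=
  Real.volume_real_Icc_of_le hab ▸ measureReal_mono h measure_Icc_lt_top.ne

section Endpoint

variable {n : ℕ} {E : Set ℝ} {a b θ : ℝ} {P : ℝ[X]}

theorem abs_eval_le_eval_T_of_subset_Icc (hE : IsCompact E) (hEab : E ⊆ Icc a b)
    (hμ : 0 < volume.real E) (hP : P.natDegree ≤ n) (hPE : ∀ x ∈ E, |P.eval x| ≤ 1) :
    |P.eval a| ≤ (T ℝ n).eval (2 * (b - a) / volume.real E - 1) := by
  set μ := volume.real E
  have hfin : volume E ≠ ⊤ := hE.measure_lt_top.ne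
  have hne : E.Nonempty :=
    nonempty_of_measure_ne_zero (μ := volume) fun h => hμ.ne' (by simp [μ, measureReal_def, h])
  -- `b - μ + m j` is the extremal point `node n j` of `T_n` moved to `[b - μ, b]` by the
  -- inverse of `x ↦ 2 * (b - x) / μ - 1`
  set m : ℕ → ℝ := fun j => μ / 2 * (1 - node n j)
  have hm : ∀ j, m j ∈ Icc 0 μ := fun j => by
    obtain ⟨h₁, h₂⟩ := node_mem_Icc (n := n) (i := j)
    constructor <;> simp only [m] <;> nlinarith
  choose t htE htm using fun j => exists_mem_cumMeasure_eq hE hne (hm j)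
  set Q := (T ℝ n).comp (C (-2 / μ) * X + C (2 * b / μ - 1))
  have hQ : ∀ x, Q.eval x = (T ℝ n).eval (2 * (b - x) / μ - 1) := fun x => by
    simp only [Q, eval_comp, eval_add, eval_mul, eval_C, eval_X]
    ring_nf
  rw [← hQ]
  refine abs_eval_le_eval_of_nodes (t := t) (y := fun j => b - μ + m j) (fun i hi j hj hij => ?_)
    hP (natDegree_T_comp_affine_le n _ _) (fun j _ => hPE _ (htE j)) (fun j hj => ?_)
    (fun j _ => (hEab (htE j)).1) (fun j _ => ?_) (fun i _ j _ => ?_)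
  · have := strictAntiOn_node n hi hj hij
    simp only [m]
    nlinarith
  · rw [hQ, ← eval_T_real_node (Finset.mem_Iic.2 (Nat.lt_succ_iff.1 (Finset.mem_range.1 hj)))]
    congr 1
    field_simp
    ring
  · have hb := cumMeasure_le_add hfin (hEab (htE j)).2
    rw [cumMeasure_of_subset_Iic fun x hx => (hEab hx).2, htm] at hb
    linarith
  · have := (lipschitzWith_cumMeasure hfin).dist_le_mul (t j) (t i)
    rw [htm, htm, Real.dist_eq, Real.dist_eq, NNReal.coe_one, one_mul] at this
    simpa using this

theorem abs_eval_le_eval_T_of_mul_le_measure (hE : IsCompact E) (hEab : E ⊆ Icc a b)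
    (hab : a < b) (hθ : 0 < θ) (hθE : θ * (b - a) ≤ volume.real E) (hP : P.natDegree ≤ n)
    (hPE : ∀ x ∈ E, |P.eval x| ≤ 1) :
    |P.eval a| ≤ (T ℝ n).eval (2 / θ - 1) := by
  have hμ : 0 < volume.real E := (mul_pos hθ (sub_pos.2 hab)).trans_le hθE
  have hμle := volume_real_le_of_subset_Icc hEab hab.le
  have hratio : 2 * (b - a) / volume.real E ≤ 2 / θ := by
    rw [div_le_div_iff₀ hμ hθ]; linarith
  have hone : 1 ≤ 2 * (b - a) / volume.real E - 1 := by
    rw [le_sub_iff_add_le, le_div_iff₀ hμ]; linarith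
  exact (abs_eval_le_eval_T_of_subset_Icc hE hEab hμ hP hPE).trans
    (monotoneOn_eval_T n hone (hone.trans (by linarith)) (by linarith))

theorem abs_eval_right_le_eval_T_of_mul_le_measure (hE : IsCompact E) (hEab : E ⊆ Icc a b)
    (hab : a < b) (hθ : 0 < θ) (hθE : θ * (b - a) ≤ volume.real E) (hP : P.natDegree ≤ n)
    (hPE : ∀ x ∈ E, |P.eval x| ≤ 1) :
    |P.eval b| ≤ (T ℝ n).eval (2 / θ - 1) := by
  have hreflect := abs_eval_le_eval_T_of_mul_le_measure (n := n) (E := -E) (a := -b) (b := -a)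
    (P := P.comp (-X)) hE.neg (fun x hx => ?_) (neg_lt_neg hab) hθ ?_ ?_ (fun x hx => ?_)
  · simpa using hreflect
  · have := hEab hx
    constructor <;> linarith [this.1, this.2]
  · rwa [measureReal_def, Measure.measure_neg, neg_sub_neg]
  · rwa [natDegree_comp, natDegree_neg, natDegree_X, mul_one]
  · simpa using hPE _ hx

end Endpoint

theorem abs_eval_le_eval_T_of_measure_ge {n : ℕ} {δ : ℝ} {E : Set ℝ} {P : ℝ[X]} (hδ : δ < 1)
    (hEc : IsClosed E) (hE : E ⊆ Icc (-1) 1) (hμ : 2 - 2 * δ ≤ volume.real E)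
    (hP : P.natDegree ≤ n) (hPE : ∀ x ∈ E, |P.eval x| ≤ 1) {x : ℝ} (hx : x ∈ Icc (-1) 1) :
    |P.eval x| ≤ (T ℝ n).eval ((1 + δ) / (1 - δ)) := by
  have hθ : 0 < 1 - δ := sub_pos.2 hδ
  rw [show (1 + δ) / (1 - δ) = 2 / (1 - δ) - 1 by field_simp; ring]
  have hpiece : ∀ s t, IsCompact (E ∩ Icc s t) := fun s t => isCompact_Icc.inter_left hEc
  set L := volume.real (E ∩ Icc (-1) x)
  set R := volume.real (E ∩ Icc x 1)
  have hL : L ≤ x - -1 := volume_real_le_of_subset_Icc inter_subset_right hx.1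
  have hR : R ≤ 1 - x := volume_real_le_of_subset_Icc inter_subset_right hx.2
  have hLR : volume.real E ≤ L + R := by
    refine (measureReal_mono (fun z hz => ?_) ?_).trans (measureReal_union_le _ _)
    · exact (le_total z x).imp (fun h => ⟨hz, (hE hz).1, h⟩) fun h => ⟨hz, h, (hE hz).2⟩
    · exact measure_union_ne_top ((hpiece _ _).measure_lt_top.ne) (hpiece _ _).measure_lt_top.ne
  by_cases hright : x < 1 ∧ (1 - δ) * (1 - x) ≤ R
  · exact abs_eval_le_eval_T_of_mul_le_measure (hpiece x 1) inter_subset_right hright.1 hθ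
      hright.2 hP fun z hz => hPE z hz.1
  · have hleft : -1 < x ∧ (1 - δ) * (x - -1) ≤ L := by
      rcases hx.2.lt_or_eq with hx1 | rfl
      · have := not_le.1 fun h => hright ⟨hx1, h⟩
        constructor <;> nlinarith
      · constructor <;> linarith
    exact abs_eval_right_le_eval_T_of_mul_le_measure (hpiece (-1) x) inter_subset_right
      hleft.1 hθ hleft.2 hP fun z hz => hPE z hz.1

theorem exists_remez_polynomial (n : ℕ) (δ : ℝ) :
    ∃ R : ℝ[X], R.natDegree ≤ n ∧ ∀ x, R.eval x = (T ℝ n).eval ((δ - x) / (1 - δ)) := by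
  refine ⟨(T ℝ n).comp (C (-(1 - δ)⁻¹) * X + C (δ / (1 - δ))),
    natDegree_T_comp_affine_le n _ _, fun x => ?_⟩
  simp only [eval_comp, eval_add, eval_mul, eval_C, eval_X]
  ring_nf

lemma abs_eval_T_remez_le_one (n : ℕ) {δ x : ℝ} (hδ : δ < 1) (hx : x ∈ Icc (-1 + 2 * δ) 1) :
    |(T ℝ n).eval ((δ - x) / (1 - δ))| ≤ 1 := by
  have hθ : 0 < 1 - δ := sub_pos.2 hδ
  refine abs_eval_T_real_le_one n (abs_le.2 ⟨?_, ?_⟩)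
  · rw [le_div_iff₀ hθ]; linarith [hx.2]
  · rw [div_le_iff₀ hθ]; linarith [hx.1]

def IsRemezBound (n : ℕ) (δ x₀ K : ℝ) : Prop :=
  ∀ (P : ℝ[X]) (E : Set ℝ), IsClosed E → E ⊆ Icc (-1) 1 → 2 - 2 * δ ≤ (volume E).toReal →
    P.natDegree ≤ n → (∀ x ∈ E, |P.eval x| ≤ 1) → |P.eval x₀| ≤ K

section Extremal

variable {n : ℕ} {δ x₀ K : ℝ}

lemma Mn_le {E : Set ℝ} (hK : 0 ≤ K)
    (h : ∀ P : ℝ[X], P.natDegree ≤ n → (∀ x ∈ E, |P.eval x| ≤ 1) → |P.eval x₀| ≤ K) :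
    Mn n x₀ E ≤ K :=
  Real.sSup_le (by rintro _ ⟨P, hP, hPE, rfl⟩; exact h P hP hPE) hK

lemma IsRemezBound.Ln_le (h : IsRemezBound n δ x₀ K) (hK : 0 ≤ K) : Ln n δ x₀ ≤ K :=
  Real.sSup_le (by
    rintro _ ⟨E, hEc, hE, hμ, rfl⟩
    exact Mn_le hK fun P hP hPE => h P E hEc hE hμ hP hPE) hK

lemma IsRemezBound.abs_eval_le_Ln (h : IsRemezBound n δ x₀ K) (hK : 0 ≤ K) {P : ℝ[X]}
    {E : Set ℝ} (hEc : IsClosed E) (hE : E ⊆ Icc (-1) 1) (hμ : 2 - 2 * δ ≤ (volume E).toReal)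
    (hP : P.natDegree ≤ n) (hPE : ∀ x ∈ E, |P.eval x| ≤ 1) : |P.eval x₀| ≤ Ln n δ x₀ := by
  have hMn : BddAbove {y | ∃ P : ℝ[X], P.natDegree ≤ n ∧ (∀ x ∈ E, |P.eval x| ≤ 1) ∧
      y = |P.eval x₀|} := ⟨K, by rintro _ ⟨P, hP, hPE, rfl⟩; exact h P E hEc hE hμ hP hPE⟩
  have hLn : BddAbove {y | ∃ E : Set ℝ, IsClosed E ∧ E ⊆ Icc (-1 : ℝ) 1 ∧
      2 - 2 * δ ≤ (volume E).toReal ∧ y = Mn n x₀ E} := ⟨K, by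
    rintro _ ⟨E, hEc, hE, hμ, rfl⟩
    exact Mn_le hK fun P hP hPE => h P E hEc hE hμ hP hPE⟩
  exact (le_csSup hMn ⟨P, hP, hPE, rfl⟩).trans (le_csSup hLn ⟨E, hEc, hE, hμ, rfl⟩)

end Extremal

/-- the Remez constant `sup_{x₀} L_{n,δ}(x₀) = 𝔗ₙ((1+δ)/(1−δ))`,
attained at `x₀ = −1` by the Remez polynomial for `E = [−1+2δ,1]`. -/
theorem remez_constant (n : ℕ) (δ : ℝ) (hδ : δ ∈ Ioo (0 : ℝ) 1) :
    sSup {y | ∃ x₀ ∈ Icc (-1 : ℝ) 1, y = Ln n δ x₀} = Cheb n ((1 + δ) / (1 - δ)) ∧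
    (∀ (P : Polynomial ℝ) (E : Set ℝ), IsClosed E → E ⊆ Icc (-1 : ℝ) 1 →
      2 - 2 * δ ≤ (volume E).toReal → P.natDegree ≤ n → (∀ x ∈ E, |P.eval x| ≤ 1) →
      ∀ x ∈ Icc (-1 : ℝ) 1, |P.eval x| ≤ Cheb n ((1 + δ) / (1 - δ))) ∧
    (∃ P : Polynomial ℝ, P.natDegree ≤ n ∧
      (∀ x : ℝ, P.eval x = (Polynomial.Chebyshev.T ℝ (n : ℤ)).eval ((δ - x) / (1 - δ))) ∧
      (∀ x ∈ Icc (-1 + 2 * δ) 1, |P.eval x| ≤ 1) ∧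
      |P.eval (-1)| = Cheb n ((1 + δ) / (1 - δ))) := by
  obtain ⟨hδ0, hδ1⟩ := hδ
  have hσ : 1 ≤ (1 + δ) / (1 - δ) := by rw [le_div_iff₀ (by linarith)]; linarith
  rw [cheb_eq_eval_T hσ]
  set K := (T ℝ n).eval ((1 + δ) / (1 - δ))
  have hK : 0 ≤ K := zero_le_one.trans (one_le_eval_T_real n hσ)
  have remez : ∀ x₀ ∈ Icc (-1 : ℝ) 1, IsRemezBound n δ x₀ K := fun x₀ hx₀ P E hEc hE hμ hP hPE =>
    abs_eval_le_eval_T_of_measure_ge hδ1 hEc hE hμ hP hPE hx₀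
  obtain ⟨R, hR, hReval⟩ := exists_remez_polynomial n δ
  have hRbound : ∀ x ∈ Icc (-1 + 2 * δ) 1, |R.eval x| ≤ 1 := fun x hx =>
    hReval x ▸ abs_eval_T_remez_le_one n hδ1 hx
  have hRval : |R.eval (-1)| = K := by
    rw [hReval, show (δ - -1) / (1 - δ) = (1 + δ) / (1 - δ) by ring, abs_of_nonneg hK]
  refine ⟨?_, fun P E hEc hE hμ hP hPE x hx => remez x hx P E hEc hE hμ hP hPE,
    R, hR, hReval, hRbound, hRval⟩
  have hm1 : (-1 : ℝ) ∈ Icc (-1) 1 := ⟨le_rfl, by norm_num⟩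
  have hLn₀ : K ≤ Ln n δ (-1) := hRval ▸ (remez _ hm1).abs_eval_le_Ln hK isClosed_Icc
    (Icc_subset_Icc (by linarith) le_rfl)
    (by rw [← measureReal_def, Real.volume_real_Icc_of_le (by linarith)]; linarith) hR hRbound
  exact IsGreatest.csSup_eq ⟨⟨-1, hm1, (le_antisymm ((remez _ hm1).Ln_le hK) hLn₀).symm⟩,
    by rintro _ ⟨x₀, hx₀, rfl⟩; exact (remez x₀ hx₀).Ln_le hK⟩
end

section
/- Let δ ∈ (0,1) and m ≥ 1. The Akhiezer polynomial A_{2m,δ}(x) = 𝔗ₘ((1+δ²−2x²)/(1−δ²)) satisfies |A_{2m,δ}(x)| ≤ 1 for every x ∈ [−1,1] with |x| ≥ δ, and A_{2m,δ}(0) = 𝔗ₘ((1+δ²)/(1−δ²)) > 1. Consequently M_{2m}(0, E(0,δ)) ≥ 𝔗ₘ((1+δ²)/(1−δ²)) > 1; in particular for δ = 1/2 one gets M_{2m}(0, E(0,1/2)) ≥ 𝔗ₘ(5/3) > 1 = 𝔗_{2m}((1/2 − 0)/(1 − 1/2)). -/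
open MeasureTheory Set Filter Real

/-! The substitution `x ↦ (1 + δ² - 2x²) / (1 - δ²)` maps `δ ≤ |x| ≤ 1` into `[-1, 1]` and
sends `0` to `(1 + δ²) / (1 - δ²) > 1`. Composing `𝔗ₘ` with it gives a polynomial of degree `2m`
bounded by `1` on `E(0, δ)` whose value at `0` is `𝔗ₘ(cosh θ) = cosh (mθ) > 1`. -/

open Polynomial Polynomial.Chebyshev

theorem eval_T_real_eq_Cheb (n : ℕ) {y : ℝ} (hy : 1 ≤ y) : (T ℝ n).eval y = Cheb n y := by
  set θ := arcosh y
  have hsinh : √(y ^ 2 - 1) = sinh θ := (sinh_arcosh hy).symm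
  rw [Cheb, hsinh, ← cosh_arcosh hy, T_real_cosh, cosh_add_sinh, cosh_sub_sinh,
    ← exp_nat_mul, ← exp_nat_mul, cosh_eq]
  push_cast
  ring_nf

/-- Lagrange interpolation at `n + 1` points of `E` bounds `|P x₀|` uniformly, so the
supremum defining `Mn` is finite. -/
theorem le_Mn_of_infinite {n : ℕ} {E : Set ℝ} (hE : E.Infinite) (x₀ : ℝ) {P : ℝ[X]}
    (hP : P.natDegree ≤ n) (hPE : ∀ x ∈ E, |P.eval x| ≤ 1) : |P.eval x₀| ≤ Mn n x₀ E := by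
  obtain ⟨s, hsE, hs⟩ := hE.exists_subset_card_eq (n + 1)
  refine le_csSup ⟨∑ i ∈ s, |(Lagrange.basis s id i).eval x₀|, ?_⟩ ⟨P, hP, hPE, rfl⟩
  rintro _ ⟨Q, hQ, hQE, rfl⟩
  have hdeg : Q.degree < s.card := by
    rw [hs]
    exact degree_le_natDegree.trans_lt (by exact_mod_cast Nat.lt_succ_of_le hQ)
  rw [Lagrange.eq_interpolate (Set.injOn_id _) hdeg, Lagrange.interpolate_apply, eval_finsetSum]
  refine (Finset.abs_sum_le_sum_abs _ _).trans (Finset.sum_le_sum fun x hx => ?_)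
  rw [eval_mul, eval_C, abs_mul]
  exact mul_le_of_le_one_left (abs_nonneg _) (hQE x (hsE hx))

theorem Eset_zero_eq (δ : ℝ) : Eset 0 δ = {x | |x| ≤ 1 ∧ δ ≤ |x|} := by
  ext x
  simp only [Eset, Set.mem_sdiff, mem_Icc, mem_Ioo, zero_sub, zero_add, mem_ofPred_eq, abs_le,
    le_abs', not_and_or, not_lt]

theorem Eset_zero_infinite {δ : ℝ} (hδ : δ < 1) : (Eset 0 δ).Infinite := by
  refine (Icc_infinite (max_lt hδ one_pos)).mono fun x hx => ?_
  have hx₀ : 0 ≤ x := (le_max_right δ 0).trans hx.1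
  rw [Eset_zero_eq, mem_ofPred_eq, abs_of_nonneg hx₀]
  exact ⟨hx.2, (le_max_left δ 0).trans hx.1⟩

noncomputable def akhiezerPoly (m : ℕ) (δ : ℝ) : ℝ[X] :=
  (T ℝ m).comp (C (1 - δ ^ 2)⁻¹ * (C (1 + δ ^ 2) - 2 * X ^ 2))

theorem eval_akhiezerPoly (m : ℕ) (δ x : ℝ) :
    (akhiezerPoly m δ).eval x = (T ℝ m).eval ((1 + δ ^ 2 - 2 * x ^ 2) / (1 - δ ^ 2)) := by
  simp only [akhiezerPoly, eval_comp, eval_mul, eval_C, eval_sub, eval_pow, eval_X, eval_ofNat,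
    inv_mul_eq_div]

theorem natDegree_akhiezerPoly_le (m : ℕ) (δ : ℝ) : (akhiezerPoly m δ).natDegree ≤ 2 * m := by
  have hq : (C (1 - δ ^ 2)⁻¹ * (C (1 + δ ^ 2) - 2 * X ^ 2)).natDegree ≤ 2 := by compute_degree
  refine natDegree_comp_le.trans ?_
  rw [natDegree_T, Int.natAbs_natCast, mul_comm]
  exact Nat.mul_le_mul_right m hq

theorem abs_akhiezer_arg_le_one {δ x : ℝ} (hδ₀ : 0 ≤ δ) (hδ₁ : δ < 1) (hx : |x| ≤ 1)
    (hδx : δ ≤ |x|) : |(1 + δ ^ 2 - 2 * x ^ 2) / (1 - δ ^ 2)| ≤ 1 := by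
  have hden : 0 < 1 - δ ^ 2 := by nlinarith
  have hx2 : x ^ 2 ≤ 1 := by nlinarith [sq_abs x, abs_nonneg x]
  have hδx2 : δ ^ 2 ≤ x ^ 2 := by nlinarith [sq_abs x]
  rw [abs_div, abs_of_pos hden, div_le_one hden, abs_le]
  constructor <;> linarith

theorem abs_eval_akhiezerPoly_le_one (m : ℕ) {δ x : ℝ} (hδ₀ : 0 ≤ δ) (hδ₁ : δ < 1)
    (hx : x ∈ Eset 0 δ) : |(akhiezerPoly m δ).eval x| ≤ 1 := by
  rw [Eset_zero_eq] at hx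
  rw [eval_akhiezerPoly]
  exact abs_eval_T_real_le_one _ (abs_akhiezer_arg_le_one hδ₀ hδ₁ hx.1 hx.2)

theorem one_lt_akhiezer_arg {δ : ℝ} (hδ₀ : 0 < δ) (hδ₁ : δ < 1) :
    1 < (1 + δ ^ 2) / (1 - δ ^ 2) := by
  rw [one_lt_div (by nlinarith)]
  nlinarith

/-- the Akhiezer polynomial `A_{2m,δ}(x) = 𝔗ₘ((1+δ²−2x²)/(1−δ²))`
is bounded by 1 on `E(0,δ)` and exceeds 1 at `0`; consequently
`M_{2m}(0,E(0,δ)) ≥ 𝔗ₘ((1+δ²)/(1−δ²)) > 1`, while the Remez polynomial value at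
`0` for `δ = 1/2` is just `1`. -/
theorem akhiezer_beats_remez_at_zero (δ : ℝ) (hδ : δ ∈ Ioo (0 : ℝ) 1)
    (m : ℕ) (hm : 1 ≤ m) :
    (∀ x ∈ Icc (-1 : ℝ) 1, δ ≤ |x| →
      |(Polynomial.Chebyshev.T ℝ (m : ℤ)).eval ((1 + δ^2 - 2 * x^2) / (1 - δ^2))| ≤ 1) ∧
    (Polynomial.Chebyshev.T ℝ (m : ℤ)).eval ((1 + δ^2) / (1 - δ^2))
      = Cheb m ((1 + δ^2) / (1 - δ^2)) ∧
    1 < Cheb m ((1 + δ^2) / (1 - δ^2)) ∧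
    Cheb m ((1 + δ^2) / (1 - δ^2)) ≤ Mn (2 * m) 0 (Eset 0 δ) ∧
    (δ = 1 / 2 →
      Cheb m (5 / 3) ≤ Mn (2 * m) 0 (Eset 0 (1 / 2)) ∧ 1 < Cheb m (5 / 3) ∧
      Cheb (2 * m) ((1 / 2 - 0) / (1 - 1 / 2)) = 1) := by
  obtain ⟨hδ₀, hδ₁⟩ := hδ
  have hy := one_lt_akhiezer_arg hδ₀ hδ₁
  have hval := eval_T_real_eq_Cheb m hy.le
  have hgt : 1 < Cheb m ((1 + δ ^ 2) / (1 - δ ^ 2)) :=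
    hval ▸ one_lt_eval_T_real (by omega) hy
  have hMn : Cheb m ((1 + δ ^ 2) / (1 - δ ^ 2)) ≤ Mn (2 * m) 0 (Eset 0 δ) := by
    have := le_Mn_of_infinite (Eset_zero_infinite hδ₁) 0 (natDegree_akhiezerPoly_le m δ)
      fun x hx => abs_eval_akhiezerPoly_le_one m hδ₀.le hδ₁ hx
    rwa [eval_akhiezerPoly, zero_pow two_ne_zero, mul_zero, sub_zero, hval,
      abs_of_pos (by linarith)] at this
  refine ⟨fun x hx hδx => ?_, hval, hgt, hMn, ?_⟩
  · have hxE : x ∈ Eset 0 δ := by rw [Eset_zero_eq]; exact ⟨abs_le.2 hx, hδx⟩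
    rw [← eval_akhiezerPoly]
    exact abs_eval_akhiezerPoly_le_one m hδ₀.le hδ₁ hxE
  · rintro rfl
    norm_num at hgt hMn ⊢
    exact ⟨hMn, hgt, by simp [Cheb]⟩
end

section
/- For every δ ∈ (0,1), the function α ↦ c(α) is differentiable on (δ−1, 1−δ) and its derivative satisfies c'(α) > 1 for every α ∈ (δ−1, 0). -/
open MeasureTheory Set Filter Real

/-!
The substitution `ξ = α + δ t` fixes the endpoints of the gap at `t = ±1` and writes `c(α)` as
`N(α) / D(α)`, where `N` and `D` integrate `x` and `1` (with `x = α + δ t`) against the weight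
`W = dt / √((1 - x²)(1 - t²))`. Differentiating under the integral sign, `∂_α W = x / (1 - x²) · W`,
so `c'(α) - 1 = (∫ x · x/(1-x²) W · ∫ W - ∫ x W · ∫ x/(1-x²) W) / D²`. Both `x` and `x / (1 - x²)`
increase strictly with `t`, so the numerator is positive by Chebyshev's integral inequality.
-/

noncomputable def chebyshevWeight (x : ℝ) : ℝ := (√(1 - x ^ 2))⁻¹

theorem intervalIntegrable_chebyshevWeight :
    IntervalIntegrable chebyshevWeight volume (-1) 1 := by
  refine intervalIntegral.intervalIntegrable_deriv_of_nonneg (g := arcsin)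
    continuous_arcsin.continuousOn (fun x hx => ?_) fun _ _ => inv_nonneg.2 (Real.sqrt_nonneg _)
  rw [min_eq_left (by norm_num), max_eq_right (by norm_num)] at hx
  simpa only [one_div, chebyshevWeight] using hasDerivAt_arcsin hx.1.ne' hx.2.ne

theorem hasDerivAt_chebyshevWeight {x : ℝ} (hx : x ∈ Ioo (-1 : ℝ) 1) :
    HasDerivAt chebyshevWeight (x / (1 - x ^ 2) * chebyshevWeight x) x := by
  have hpos : 0 < 1 - x ^ 2 := by nlinarith [hx.1, hx.2]
  have hsqrt := ((hasDerivAt_pow 2 x).const_sub 1).sqrt hpos.ne'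
  refine (hsqrt.inv (Real.sqrt_pos.mpr hpos).ne').congr_deriv ?_
  rw [chebyshevWeight, Real.sq_sqrt hpos.le]
  field_simp
  ring

theorem continuousOn_chebyshevWeight : ContinuousOn chebyshevWeight (Ioo (-1) 1) :=
  fun _ hx => (hasDerivAt_chebyshevWeight hx).continuousAt.continuousWithinAt

theorem chebyshevWeight_pos {x : ℝ} (hx : x ∈ Ioo (-1 : ℝ) 1) : 0 < chebyshevWeight x :=
  inv_pos.2 (Real.sqrt_pos.2 (by nlinarith [hx.1, hx.2]))

theorem strictMonoOn_div_one_sub_sq : StrictMonoOn (fun x : ℝ => x / (1 - x ^ 2)) (Ioo (-1) 1) := by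
  intro x hx y hy hxy
  have hx' : 0 < 1 - x ^ 2 := by nlinarith [hx.1, hx.2]
  have hy' : 0 < 1 - y ^ 2 := by nlinarith [hy.1, hy.2]
  rw [div_lt_div_iff₀ hx' hy']
  nlinarith [mul_pos (sub_pos.2 hxy) (show 0 < 1 + x * y by nlinarith [hx.1, hx.2, hy.1, hy.2])]

theorem continuousOn_div_one_sub_sq : ContinuousOn (fun x : ℝ => x / (1 - x ^ 2)) (Ioo (-1) 1) :=
  continuousOn_id.div (by fun_prop) fun x hx => by nlinarith [hx.1, hx.2]

theorem hasDerivAt_integral_comp_add_mul_mul {φ φ' w : ℝ → ℝ} {U : Set ℝ} {a b c α₀ : ℝ}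
    (hU : IsOpen U) (hφ : ∀ x ∈ U, HasDerivAt φ (φ' x) x) (hφ' : ContinuousOn φ' U)
    (hw : IntervalIntegrable w volume a b) (hα₀ : ∀ t ∈ uIcc a b, α₀ + c * t ∈ U) :
    HasDerivAt (fun α => ∫ t in a..b, φ (α + c * t) * w t)
      (∫ t in a..b, φ' (α₀ + c * t) * w t) α₀ := by
  set K := (fun t => α₀ + c * t) '' uIcc a b
  have hK : IsCompact K := isCompact_uIcc.image (by fun_prop)
  obtain ⟨ε, hε, hKU⟩ := hK.exists_cthickening_subset_open hU (image_subset_iff.2 hα₀)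
  obtain ⟨C, hC⟩ := hK.cthickening.exists_bound_of_continuousOn (hφ'.mono hKU)
  have hmem : ∀ α ∈ Metric.ball α₀ ε, ∀ t ∈ uIcc a b, α + c * t ∈ Metric.cthickening ε K :=
    fun α hα t ht => Metric.mem_cthickening_of_dist_le _ (α₀ + c * t) _ _ ⟨t, ht, rfl⟩
      (by rw [Real.dist_eq, add_sub_add_right_eq_sub]; exact (Metric.mem_ball.1 hα).le)
  have hint : ∀ {ψ : ℝ → ℝ}, ContinuousOn ψ U → ∀ α ∈ Metric.ball α₀ ε,
      IntervalIntegrable (fun t => ψ (α + c * t) * w t) volume a b := fun hψ α hα =>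
    hw.continuousOn_mul (hψ.comp (by fun_prop) fun t ht => hKU (hmem α hα t ht))
  have hφc : ContinuousOn φ U := fun x hx => (hφ x hx).continuousAt.continuousWithinAt
  refine (intervalIntegral.hasDerivAt_integral_of_dominated_loc_of_deriv_le
    (F' := fun α t => φ' (α + c * t) * w t) (bound := fun t => C * ‖w t‖)
    (Metric.ball_mem_nhds α₀ hε)
    (eventually_of_mem (Metric.ball_mem_nhds α₀ hε) fun α hα =>
      (hint hφc α hα).def'.aestronglyMeasurable)
    (hint hφc α₀ (Metric.mem_ball_self hε))
    (hint hφ' α₀ (Metric.mem_ball_self hε)).def'.aestronglyMeasurable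
    (ae_of_all _ fun t ht α hα => ?_) (hw.norm.const_mul C)
    (ae_of_all _ fun t ht α hα => ?_)).2
  · rw [norm_mul]
    exact mul_le_mul_of_nonneg_right (hC _ (hmem α hα t (uIoc_subset_uIcc ht))) (norm_nonneg _)
  · exact ((hφ _ (hKU (hmem α hα t (uIoc_subset_uIcc ht)))).comp_add_const α (c * t)).mul_const _

theorem integrable_and_integral_prod_mul_sub_mul {X : Type*} [MeasurableSpace X] {μ : Measure X}
    [SFinite μ] {f h w : X → ℝ} (hw : Integrable w μ) (hfw : Integrable (fun x => f x * w x) μ)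
    (hhw : Integrable (fun x => h x * w x) μ) (hfhw : Integrable (fun x => f x * h x * w x) μ) :
    Integrable (fun z : X × X => (f z.1 - f z.2) * (h z.1 - h z.2) * (w z.1 * w z.2)) (μ.prod μ) ∧
    ∫ z, (f z.1 - f z.2) * (h z.1 - h z.2) * (w z.1 * w z.2) ∂μ.prod μ =
      2 * ((∫ x, f x * h x * w x ∂μ) * (∫ x, w x ∂μ) -
        (∫ x, f x * w x ∂μ) * ∫ x, h x * w x ∂μ) := by
  set φ : X × X → ℝ := fun z => f z.1 * h z.1 * w z.1 * w z.2 - f z.1 * w z.1 * (h z.2 * w z.2)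
  have hφ : Integrable φ (μ.prod μ) := (hfhw.mul_prod hw).sub (hfw.mul_prod hhw)
  have hsymm : (fun z : X × X => (f z.1 - f z.2) * (h z.1 - h z.2) * (w z.1 * w z.2)) =
      fun z => φ z + (φ ∘ Prod.swap) z := by
    funext z; simp only [φ, Function.comp_apply, Prod.fst_swap, Prod.snd_swap]; ring
  rw [hsymm]
  refine ⟨hφ.add hφ.swap, ?_⟩
  rw [integral_add hφ hφ.swap, Function.comp_def, integral_prod_swap φ,
    integral_sub (hfhw.mul_prod hw) (hfw.mul_prod hhw),
    integral_prod_mul (fun x => f x * h x * w x) w,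
    integral_prod_mul (fun x => f x * w x) (fun x => h x * w x)]
  ring

theorem integral_mul_integral_lt_of_strictMonoOn {f h w : ℝ → ℝ} {a b : ℝ} (hab : a < b)
    (hf : StrictMonoOn f (Ioo a b)) (hh : StrictMonoOn h (Ioo a b))
    (hw₀ : ∀ x ∈ Ioo a b, 0 < w x) (hw : IntervalIntegrable w volume a b)
    (hfw : IntervalIntegrable (fun x => f x * w x) volume a b)
    (hhw : IntervalIntegrable (fun x => h x * w x) volume a b)
    (hfhw : IntervalIntegrable (fun x => f x * h x * w x) volume a b) :
    (∫ x in a..b, f x * w x) * (∫ x in a..b, h x * w x) <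
      (∫ x in a..b, f x * h x * w x) * ∫ x in a..b, w x := by
  set μ := volume.restrict (Ioo a b)
  have hμ : ∀ g : ℝ → ℝ, ∫ x in a..b, g x = ∫ x, g x ∂μ := fun g => by
    rw [intervalIntegral.integral_of_le hab.le, integral_Ioc_eq_integral_Ioo]
  have hi : ∀ {g : ℝ → ℝ}, IntervalIntegrable g volume a b → Integrable g μ := fun hg =>
    (intervalIntegrable_iff_integrableOn_Ioo_of_le hab.le).1 hg
  obtain ⟨hρi, hρ_eq⟩ :=
    integrable_and_integral_prod_mul_sub_mul (hi hw) (hi hfw) (hi hhw) (hi hfhw)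
  set ρ : ℝ × ℝ → ℝ := fun z => (f z.1 - f z.2) * (h z.1 - h z.2) * (w z.1 * w z.2)
  have hρ : ∀ z ∈ Ioo a b ×ˢ Ioo a b, z.1 ≠ z.2 → 0 < ρ z := by
    rintro ⟨x, y⟩ ⟨hx, hy⟩ hxy
    refine mul_pos ?_ (mul_pos (hw₀ x hx) (hw₀ y hy))
    rcases lt_or_gt_of_ne hxy with hlt | hlt
    · exact mul_pos_of_neg_of_neg (sub_neg.2 (hf hx hy hlt)) (sub_neg.2 (hh hx hy hlt))
    · exact mul_pos (sub_pos.2 (hf hy hx hlt)) (sub_pos.2 (hh hy hx hlt))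
  have hρ₀ : 0 ≤ᵐ[μ.prod μ] ρ := by
    rw [Measure.prod_restrict]
    filter_upwards [ae_restrict_mem (measurableSet_Ioo.prod measurableSet_Ioo)] with z hz
    rcases eq_or_ne z.1 z.2 with hdiag | hdiag
    · simp [ρ, hdiag]
    · exact (hρ z hz hdiag).le
  obtain ⟨m, ham, hmb⟩ := exists_between hab
  have hsupp : Ioo a m ×ˢ Ioo m b ⊆ Function.support ρ := fun z ⟨h₁, h₂⟩ =>
    (hρ z ⟨⟨h₁.1, h₁.2.trans hmb⟩, ⟨ham.trans h₂.1, h₂.2⟩⟩ (h₁.2.trans h₂.1).ne).ne'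
  have hpos : 0 < ∫ z, ρ z ∂μ.prod μ := by
    rw [integral_pos_iff_support_of_nonneg_ae hρ₀ hρi]
    refine (measure_mono hsupp).trans_lt' ?_
    rw [Measure.prod_prod, Measure.restrict_apply measurableSet_Ioo,
      Measure.restrict_apply measurableSet_Ioo, inter_eq_left.2 (Ioo_subset_Ioo_right hmb.le),
      inter_eq_left.2 (Ioo_subset_Ioo_left ham.le), Real.volume_Ioo, Real.volume_Ioo]
    exact ENNReal.mul_pos (by simpa using ham) (by simpa using hmb)
  rw [hρ_eq] at hpos
  simp only [hμ]
  linarith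

noncomputable def gapMoment (δ α : ℝ) (Φ : ℝ → ℝ) : ℝ :=
  ∫ t in (-1 : ℝ)..1, Φ (α + δ * t) * chebyshevWeight (α + δ * t) * chebyshevWeight t

section Gap

variable {δ α : ℝ}

theorem integral_div_sqrt_eq_gapMoment (hδ : 0 < δ) (hα : α ∈ Icc (δ - 1) (1 - δ))
    (Φ : ℝ → ℝ) :
    ∫ ξ in (α - δ)..(α + δ), Φ ξ / √((1 - ξ ^ 2) * (ξ - (α - δ)) * ((α + δ) - ξ)) =
      gapMoment δ α Φ := by
  have hsubst := intervalIntegral.smul_integral_comp_add_mul (a := -1) (b := 1)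
    (fun ξ => Φ ξ / √((1 - ξ ^ 2) * (ξ - (α - δ)) * ((α + δ) - ξ))) δ α
  rw [show α + δ * -1 = α - δ by ring, mul_one, smul_eq_mul,
    ← intervalIntegral.integral_const_mul] at hsubst
  rw [← hsubst]
  refine intervalIntegral.integral_congr fun t ht => ?_
  rw [uIcc_of_le (by norm_num)] at ht
  have hlo : -1 ≤ α + δ * t := by nlinarith [hα.1, ht.1]
  have hhi : α + δ * t ≤ 1 := by nlinarith [hα.2, ht.2]
  have hx : 0 ≤ 1 - (α + δ * t) ^ 2 := by nlinarith
  have hsplit : (1 - (α + δ * t) ^ 2) * (α + δ * t - (α - δ)) * (α + δ - (α + δ * t)) =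
      δ ^ 2 * ((1 - (α + δ * t) ^ 2) * (1 - t ^ 2)) := by ring
  simp only [chebyshevWeight]
  rw [hsplit, Real.sqrt_mul (sq_nonneg δ), Real.sqrt_sq hδ.le, Real.sqrt_mul hx]
  field_simp

theorem cpt_eq_gapMoment_div (hδ : 0 < δ) (hα : α ∈ Icc (δ - 1) (1 - δ)) :
    cpt δ α = gapMoment δ α (fun x => x) / gapMoment δ α fun _ => 1 := by
  rw [cpt, integral_div_sqrt_eq_gapMoment hδ hα fun x => x,
    ← integral_div_sqrt_eq_gapMoment hδ hα fun _ => 1]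

theorem add_mul_mem_Ioo_of_mem_Icc (hδ : 0 < δ) (hα : α ∈ Ioo (δ - 1) (1 - δ)) {t : ℝ}
    (ht : t ∈ Icc (-1 : ℝ) 1) : α + δ * t ∈ Ioo (-1 : ℝ) 1 :=
  ⟨by nlinarith [hα.1, ht.1], by nlinarith [hα.2, ht.2]⟩

theorem intervalIntegrable_gapMoment {Φ : ℝ → ℝ} (hΦ : ContinuousOn Φ (Ioo (-1) 1))
    (hδ : 0 < δ) (hα : α ∈ Ioo (δ - 1) (1 - δ)) :
    IntervalIntegrable
      (fun t => Φ (α + δ * t) * chebyshevWeight (α + δ * t) * chebyshevWeight t) volume (-1) 1 :=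
  intervalIntegrable_chebyshevWeight.continuousOn_mul <|
    (hΦ.mul continuousOn_chebyshevWeight).comp (by fun_prop) fun _ ht =>
      add_mul_mem_Ioo_of_mem_Icc hδ hα (by rwa [uIcc_of_le (by norm_num)] at ht)

theorem gapMoment_add {Φ Ψ : ℝ → ℝ} (hΦ : ContinuousOn Φ (Ioo (-1) 1))
    (hΨ : ContinuousOn Ψ (Ioo (-1) 1)) (hδ : 0 < δ) (hα : α ∈ Ioo (δ - 1) (1 - δ)) :
    gapMoment δ α (fun x => Φ x + Ψ x) = gapMoment δ α Φ + gapMoment δ α Ψ := by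
  rw [gapMoment, gapMoment, gapMoment, ← intervalIntegral.integral_add
    (intervalIntegrable_gapMoment hΦ hδ hα) (intervalIntegrable_gapMoment hΨ hδ hα)]
  exact intervalIntegral.integral_congr fun t _ => by ring

theorem gapMoment_one_pos (hδ : 0 < δ) (hα : α ∈ Ioo (δ - 1) (1 - δ)) :
    0 < gapMoment δ α fun _ => 1 :=
  intervalIntegral.intervalIntegral_pos_of_pos_on (intervalIntegrable_gapMoment
    continuousOn_const hδ hα) (fun t ht => by
      simpa only [one_mul] using mul_pos (chebyshevWeight_pos (add_mul_mem_Ioo_of_mem_Icc hδ hα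
        (Ioo_subset_Icc_self ht))) (chebyshevWeight_pos ht)) (by norm_num)

theorem hasDerivAt_gapMoment {Φ Φ' : ℝ → ℝ} (hΦ : ∀ x ∈ Ioo (-1 : ℝ) 1, HasDerivAt Φ (Φ' x) x)
    (hΦ' : ContinuousOn Φ' (Ioo (-1) 1)) (hδ : 0 < δ) (hα : α ∈ Ioo (δ - 1) (1 - δ)) :
    HasDerivAt (fun a => gapMoment δ a Φ)
      (gapMoment δ α fun x => Φ' x + Φ x * (x / (1 - x ^ 2))) α := by
  have hΦc : ContinuousOn Φ (Ioo (-1) 1) := fun x hx =>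
    (hΦ x hx).continuousAt.continuousWithinAt
  exact hasDerivAt_integral_comp_add_mul_mul (φ := fun x => Φ x * chebyshevWeight x)
    (φ' := fun x => (Φ' x + Φ x * (x / (1 - x ^ 2))) * chebyshevWeight x) isOpen_Ioo
    (fun x hx => ((hΦ x hx).mul (hasDerivAt_chebyshevWeight hx)).congr_deriv (by ring))
    ((hΦ'.add (hΦc.mul continuousOn_div_one_sub_sq)).mul continuousOn_chebyshevWeight)
    intervalIntegrable_chebyshevWeight fun t ht =>
      add_mul_mem_Ioo_of_mem_Icc hδ hα (by rwa [uIcc_of_le (by norm_num)] at ht)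

theorem gapMoment_mul_gapMoment_lt (hδ : 0 < δ) (hα : α ∈ Ioo (δ - 1) (1 - δ)) :
    gapMoment δ α (fun x => x) * gapMoment δ α (fun x => x / (1 - x ^ 2)) <
      gapMoment δ α (fun x => x * (x / (1 - x ^ 2))) * gapMoment δ α fun _ => 1 := by
  have hmaps : MapsTo (fun t => α + δ * t) (Ioo (-1) 1) (Ioo (-1) 1) := fun _ ht =>
    add_mul_mem_Ioo_of_mem_Icc hδ hα (Ioo_subset_Icc_self ht)
  have hint {Φ : ℝ → ℝ} (hΦ : ContinuousOn Φ (Ioo (-1) 1)) :=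
    intervalIntegrable_gapMoment hΦ hδ hα
  have hmul := hint (Φ := fun x => x * (x / (1 - x ^ 2)))
    (continuousOn_id.mul continuousOn_div_one_sub_sq)
  simp only [mul_assoc] at hmul
  have hcheb := integral_mul_integral_lt_of_strictMonoOn (f := fun t => α + δ * t)
    (h := fun t => (α + δ * t) / (1 - (α + δ * t) ^ 2))
    (w := fun t => chebyshevWeight (α + δ * t) * chebyshevWeight t) (by norm_num)
    (fun x _ y _ hxy => by dsimp only; gcongr)
    (strictMonoOn_div_one_sub_sq.comp (fun x _ y _ hxy => by gcongr) hmaps)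
    (fun t ht => mul_pos (chebyshevWeight_pos (hmaps ht)) (chebyshevWeight_pos ht))
    (by simpa only [one_mul] using hint (Φ := fun _ => 1) continuousOn_const)
    (by simpa only [mul_assoc] using hint (Φ := fun x => x) continuousOn_id)
    (by simpa only [mul_assoc] using hint continuousOn_div_one_sub_sq)
    (by simpa only [mul_assoc] using hmul)
  simpa only [gapMoment, one_mul, mul_assoc] using hcheb

theorem exists_hasDerivAt_cpt_and_one_lt (hδ : 0 < δ) (hα : α ∈ Ioo (δ - 1) (1 - δ)) :
    ∃ d, HasDerivAt (cpt δ) d α ∧ 1 < d := by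
  have hD := hasDerivAt_gapMoment (Φ := fun _ => 1) (fun x _ => hasDerivAt_const x 1)
    continuousOn_const hδ hα
  have hN := hasDerivAt_gapMoment (Φ := fun x => x) (fun x _ => hasDerivAt_id' x)
    continuousOn_const hδ hα
  simp only [zero_add, one_mul] at hD
  rw [gapMoment_add (Ψ := fun x => x * (x / (1 - x ^ 2))) continuousOn_const
    (continuousOn_id.mul continuousOn_div_one_sub_sq) hδ hα] at hN
  have hcpt : cpt δ =ᶠ[nhds α] fun a => gapMoment δ a (fun x => x) / gapMoment δ a fun _ => 1 :=
    eventually_of_mem (Ioo_mem_nhds hα.1 hα.2) fun a ha =>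
      cpt_eq_gapMoment_div hδ (Ioo_subset_Icc_self ha)
  have hDpos := gapMoment_one_pos hδ hα
  refine ⟨_, (hN.div hD hDpos.ne').congr_of_eventuallyEq hcpt, ?_⟩
  rw [one_lt_div (by positivity)]
  nlinarith [gapMoment_mul_gapMoment_lt hδ hα]

end Gap

/-- `α ↦ c(α)` is differentiable on `(δ−1, 1−δ)` with `c'(α) > 1`
for `α ∈ (δ−1, 0)`. -/
theorem critical_point_derivative_exceeds_one (δ : ℝ) (hδ : δ ∈ Ioo (0 : ℝ) 1) :
    (∀ α ∈ Ioo (δ - 1) (1 - δ), DifferentiableAt ℝ (cpt δ) α) ∧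
    (∀ α ∈ Ioo (δ - 1) (0 : ℝ), 1 < deriv (cpt δ) α) := by
  refine ⟨fun α hα => ?_, fun α hα => ?_⟩
  · obtain ⟨d, hd, -⟩ := exists_hasDerivAt_cpt_and_one_lt hδ.1 hα
    exact hd.differentiableAt
  · obtain ⟨d, hd, hd₁⟩ :=
      exists_hasDerivAt_cpt_and_one_lt hδ.1 ⟨hα.1, by linarith [hα.2, hδ.2]⟩
    rwa [hd.deriv]
end

section
/- Let δ ∈ (0,1) and set α(ε) = −1 + δ(1 + ε²/2) for ε > 0 small. Then c'(α(ε)) → +∞ as ε → 0⁺, with rate (ε log ε)^{−2}: there exist constants C₁, C₂ > 0 and ε₀ ∈ (0,1) such that C₁ ≤ (ε·log ε)²·c'(α(ε)) ≤ C₂ for all ε ∈ (0, ε₀). -/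
open MeasureTheory Set Filter Real

/-!
The substitution `ξ = α - δ cos x` turns `c(α)` into `N(α) / D(α)`, where `N` and `D` are the
integrals over `x ∈ [0, π]` of `u / √(1 - u²)` and `1 / √(1 - u²)`, `u = α - δ cos x`. These can be
differentiated under the integral sign, so `c' = (N' D - N D') / D²` with
`N' = ∫ (1 - u²)^(-3/2)` and `D' = ∫ u (1 - u²)^(-3/2)`. In terms of `R = N + D` and `S = N' + D'`,
whose integrands carry the factor `1 + u` vanishing at the endpoint `-1`, the numerator is
`R N' + (D - R) S`. At `α(ε)` one has `1 + u = δ (ε²/2 + 1 - cos x) ≍ (ε + x)²` and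
`1 - u² ≍ (ε + x)²`, so comparing with powers of `ε + x` gives `D ≍ |log ε|`, `N' ≍ ε⁻²`, `R ≍ 1`
and `0 ≤ S ≲ |log ε|`, whence `c'(α(ε)) ≍ (ε log ε)⁻²`.
-/

open intervalIntegral Metric
open scoped Interval Topology

theorem hasDerivAt_integral_comp_sub {k k' φ : ℝ → ℝ} {U : Set ℝ} {a b α : ℝ} (hU : IsOpen U)
    (hk : ∀ u ∈ U, HasDerivAt k (k' u) u) (hk' : ContinuousOn k' U) (hφ : Continuous φ)
    (hα : ∀ x ∈ [[a, b]], α - φ x ∈ U) :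
    HasDerivAt (fun y => ∫ x in a..b, k (y - φ x)) (∫ x in a..b, k' (α - φ x)) α := by
  set K := (fun x => α - φ x) '' [[a, b]]
  have hK : IsCompact K := isCompact_uIcc.image (by fun_prop)
  obtain ⟨ρ, hρ, hKU⟩ := hK.exists_cthickening_subset_open hU (image_subset_iff.2 hα)
  obtain ⟨C, hC⟩ := hK.cthickening.exists_bound_of_continuousOn (hk'.mono hKU)
  have hmem : ∀ y ∈ ball α ρ, ∀ x ∈ [[a, b]], y - φ x ∈ cthickening ρ K :=
    fun y hy x hx => mem_cthickening_of_dist_le _ _ _ _ (mem_image_of_mem _ hx)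
      (by simpa [dist_sub_right] using (mem_ball.1 hy).le)
  have hcont : ∀ {f : ℝ → ℝ}, ContinuousOn f U → ∀ y ∈ ball α ρ,
      ContinuousOn (fun x => f (y - φ x)) [[a, b]] := fun hf y hy =>
    hf.comp (by fun_prop) fun x hx => hKU (hmem y hy x hx)
  have hkc : ContinuousOn k U := fun u hu => (hk u hu).continuousAt.continuousWithinAt
  have hα₀ : α ∈ ball α ρ := mem_ball_self hρ
  refine (hasDerivAt_integral_of_dominated_loc_of_deriv_le (bound := fun _ => C)
    (ball_mem_nhds α hρ) ?_ ((hcont hkc α hα₀).intervalIntegrable)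
    (((hcont hk' α hα₀).mono uIoc_subset_uIcc).aestronglyMeasurable measurableSet_uIoc)
    (ae_of_all _ fun x hx y hy => hC _ (hmem y hy x (uIoc_subset_uIcc hx)))
    intervalIntegrable_const
    (ae_of_all _ fun x hx y hy =>
      (hk _ (hKU (hmem y hy x (uIoc_subset_uIcc hx)))).comp_sub_const y (φ x))).2
  filter_upwards [ball_mem_nhds α hρ] with y hy
  exact ((hcont hkc y hy).mono uIoc_subset_uIcc).aestronglyMeasurable measurableSet_uIoc

theorem integral_sandwich {f g : ℝ → ℝ} {a b c C : ℝ} (hab : a ≤ b)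
    (hf : IntervalIntegrable f volume a b) (hg : IntervalIntegrable g volume a b)
    (h : ∀ x ∈ Icc a b, c * f x ≤ g x ∧ g x ≤ C * f x) :
    c * ∫ x in a..b, f x ≤ ∫ x in a..b, g x ∧ ∫ x in a..b, g x ≤ C * ∫ x in a..b, f x := by
  rw [← intervalIntegral.integral_const_mul, ← intervalIntegral.integral_const_mul]
  exact ⟨integral_mono_on hab (hf.const_mul c) hg fun x hx => (h x hx).1,
    integral_mono_on hab hg (hf.const_mul C) fun x hx => (h x hx).2⟩

theorem hasDerivAt_sqrt_one_sub_sq {u : ℝ} (hu : u ∈ Ioo (-1) 1) :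
    HasDerivAt (fun u => √(1 - u ^ 2)) (-u / √(1 - u ^ 2)) u := by
  have h : 0 < 1 - u ^ 2 := by nlinarith [hu.1, hu.2]
  convert ((hasDerivAt_pow 2 u).const_sub 1).sqrt h.ne' using 1
  field_simp
  ring

theorem hasDerivAt_one_div_sqrt_one_sub_sq {u : ℝ} (hu : u ∈ Ioo (-1) 1) :
    HasDerivAt (fun u => 1 / √(1 - u ^ 2)) (u / √(1 - u ^ 2) ^ 3) u := by
  have h : 0 < √(1 - u ^ 2) := sqrt_pos.2 (by nlinarith [hu.1, hu.2])
  simp only [one_div]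
  exact ((hasDerivAt_sqrt_one_sub_sq hu).inv h.ne').congr_deriv (by field_simp)

theorem hasDerivAt_div_sqrt_one_sub_sq {u : ℝ} (hu : u ∈ Ioo (-1) 1) :
    HasDerivAt (fun u => u / √(1 - u ^ 2)) (1 / √(1 - u ^ 2) ^ 3) u := by
  have h : 0 < 1 - u ^ 2 := by nlinarith [hu.1, hu.2]
  have hs : 0 < √(1 - u ^ 2) := sqrt_pos.2 h
  rw [show (fun u : ℝ => u / √(1 - u ^ 2)) = fun u => u * (1 / √(1 - u ^ 2)) from
    funext fun u => (mul_one_div u _).symm]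
  refine ((hasDerivAt_id' u).fun_mul (hasDerivAt_one_div_sqrt_one_sub_sq hu)).congr_deriv ?_
  field_simp
  rw [sq_sqrt h.le]
  ring

theorem continuousOn_div_sqrt_one_sub_sq_pow {f : ℝ → ℝ} (hf : Continuous f) (n : ℕ) :
    ContinuousOn (fun u => f u / √(1 - u ^ 2) ^ n) (Ioo (-1) 1) := fun u hu =>
  have h : 0 < √(1 - u ^ 2) := sqrt_pos.2 (by nlinarith [hu.1, hu.2])
  ContinuousAt.continuousWithinAt (by fun_prop (disch := exact pow_ne_zero _ h.ne'))

theorem continuousOn_div_sqrt_one_sub_sq {f : ℝ → ℝ} (hf : Continuous f) :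
    ContinuousOn (fun u => f u / √(1 - u ^ 2)) (Ioo (-1) 1) := by
  simpa only [pow_one] using continuousOn_div_sqrt_one_sub_sq_pow hf 1

theorem image_sub_mul_cos_Ioo {δ : ℝ} (hδ : 0 < δ) (α : ℝ) :
    (fun x => α - δ * cos x) '' Ioo 0 π = Ioo (α - δ) (α + δ) := by
  have hcos : cos '' Ioo 0 π = Ioo (-1) 1 := cosPartialHomeomorph.image_source_eq_target
  rw [show (fun x => α - δ * cos x) = (α - ·) ∘ (δ * ·) ∘ cos from rfl, image_comp, image_comp,
    hcos, image_mul_left_Ioo hδ, image_const_sub_Ioo]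
  congr 1 <;> ring

theorem integral_gap_eq_integral_sub_mul_cos {δ : ℝ} (hδ : 0 < δ) (α : ℝ) (g : ℝ → ℝ) :
    (∫ ξ in (α - δ)..(α + δ), g ξ / √((1 - ξ ^ 2) * (ξ - (α - δ)) * ((α + δ) - ξ))) =
      ∫ x in (0:ℝ)..π, g (α - δ * cos x) / √(1 - (α - δ * cos x) ^ 2) := by
  have hmono : StrictMonoOn (fun x => α - δ * cos x) (Ioo 0 π) := fun x hx y hy hxy => by
    have := strictAntiOn_cos (Ioo_subset_Icc_self hx) (Ioo_subset_Icc_self hy) hxy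
    dsimp only; nlinarith
  have hderiv : ∀ x ∈ Ioo 0 π, HasDerivWithinAt (fun x => α - δ * cos x) (δ * sin x) (Ioo 0 π) x :=
    fun x _ => by simpa using ((hasDerivAt_cos x).const_mul δ).const_sub α |>.hasDerivWithinAt
  rw [integral_of_le (by linarith), integral_of_le pi_pos.le, integral_Ioc_eq_integral_Ioo,
    integral_Ioc_eq_integral_Ioo, ← image_sub_mul_cos_Ioo hδ α,
    integral_image_eq_integral_abs_deriv_smul measurableSet_Ioo hderiv hmono.injOn]
  refine setIntegral_congr_fun measurableSet_Ioo fun x hx => ?_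
  have hsin : 0 < δ * sin x := mul_pos hδ (sin_pos_of_pos_of_lt_pi hx.1 hx.2)
  have hprod : (α - δ * cos x - (α - δ)) * (α + δ - (α - δ * cos x)) = (δ * sin x) ^ 2 := by
    linear_combination (-δ ^ 2) * sin_sq_add_cos_sq x
  rw [mul_assoc, hprod, sqrt_mul' _ (sq_nonneg _), sqrt_sq hsin.le, abs_of_pos hsin, smul_eq_mul,
    mul_div_assoc', mul_comm (δ * sin x), mul_div_mul_right _ _ hsin.ne']

/-- `gapIntegral k δ α = ∫_{α-δ}^{α+δ} k ξ / √((ξ - (α - δ)) ((α + δ) - ξ)) dξ`, written in the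
variable `x` of `ξ = α - δ cos x`. -/
noncomputable def gapIntegral (k : ℝ → ℝ) (δ α : ℝ) : ℝ :=
  ∫ x in (0:ℝ)..π, k (α - δ * cos x)

theorem cpt_eq_div_gapIntegral {δ : ℝ} (hδ : 0 < δ) :
    cpt δ = fun α => gapIntegral (fun u => u / √(1 - u ^ 2)) δ α /
      gapIntegral (fun u => 1 / √(1 - u ^ 2)) δ α := by
  ext α
  exact congr_arg₂ (· / ·) (integral_gap_eq_integral_sub_mul_cos hδ α fun ξ => ξ)
    (integral_gap_eq_integral_sub_mul_cos hδ α fun _ => 1)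

theorem sub_mul_cos_mem_Ioo {δ α : ℝ} (hδ : 0 ≤ δ) (hα : α ∈ Ioo (δ - 1) (1 - δ)) (x : ℝ) :
    α - δ * cos x ∈ Ioo (-1) 1 := by
  have h1 := neg_one_le_cos x
  have h2 := cos_le_one x
  constructor <;> nlinarith [hα.1, hα.2]

section gapIntegral

variable {k k' : ℝ → ℝ} {δ α : ℝ}

theorem intervalIntegrable_gapIntegrand (hk : ContinuousOn k (Ioo (-1) 1)) (hδ : 0 ≤ δ)
    (hα : α ∈ Ioo (δ - 1) (1 - δ)) :
    IntervalIntegrable (fun x => k (α - δ * cos x)) volume 0 π :=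
  (hk.comp_continuous (by fun_prop) (sub_mul_cos_mem_Ioo hδ hα)).intervalIntegrable _ _

theorem gapIntegral_add (hk : ContinuousOn k (Ioo (-1) 1)) (hk' : ContinuousOn k' (Ioo (-1) 1))
    (hδ : 0 ≤ δ) (hα : α ∈ Ioo (δ - 1) (1 - δ)) :
    gapIntegral (fun u => k u + k' u) δ α = gapIntegral k δ α + gapIntegral k' δ α :=
  intervalIntegral.integral_add (intervalIntegrable_gapIntegrand hk hδ hα)
    (intervalIntegrable_gapIntegrand hk' hδ hα)

theorem gapIntegral_pos (hk : ContinuousOn k (Ioo (-1) 1)) (hpos : ∀ u ∈ Ioo (-1) 1, 0 < k u)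
    (hδ : 0 ≤ δ) (hα : α ∈ Ioo (δ - 1) (1 - δ)) : 0 < gapIntegral k δ α :=
  intervalIntegral.intervalIntegral_pos_of_pos_on (intervalIntegrable_gapIntegrand hk hδ hα)
    (fun x _ => hpos _ (sub_mul_cos_mem_Ioo hδ hα x)) pi_pos

theorem hasDerivAt_gapIntegral (hk : ∀ u ∈ Ioo (-1) 1, HasDerivAt k (k' u) u)
    (hk' : ContinuousOn k' (Ioo (-1) 1)) (hδ : 0 ≤ δ) (hα : α ∈ Ioo (δ - 1) (1 - δ)) :
    HasDerivAt (gapIntegral k δ) (gapIntegral k' δ α) α :=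
  hasDerivAt_integral_comp_sub isOpen_Ioo hk hk' (by fun_prop)
    fun x _ => sub_mul_cos_mem_Ioo hδ hα x

end gapIntegral

theorem hasDerivAt_cpt {δ α : ℝ} (hδ : 0 < δ) (hα : α ∈ Ioo (δ - 1) (1 - δ)) :
    HasDerivAt (cpt δ)
      ((gapIntegral (fun u => 1 / √(1 - u ^ 2) ^ 3) δ α *
          gapIntegral (fun u => 1 / √(1 - u ^ 2)) δ α -
        gapIntegral (fun u => u / √(1 - u ^ 2)) δ α *
          gapIntegral (fun u => u / √(1 - u ^ 2) ^ 3) δ α) /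
        gapIntegral (fun u => 1 / √(1 - u ^ 2)) δ α ^ 2) α := by
  have hD := hasDerivAt_gapIntegral (fun u hu => hasDerivAt_one_div_sqrt_one_sub_sq hu)
    (continuousOn_div_sqrt_one_sub_sq_pow continuous_id 3) hδ.le hα
  have hN := hasDerivAt_gapIntegral (fun u hu => hasDerivAt_div_sqrt_one_sub_sq hu)
    (continuousOn_div_sqrt_one_sub_sq_pow continuous_const 3) hδ.le hα
  have hDpos := gapIntegral_pos (k := fun u => 1 / √(1 - u ^ 2))
    (continuousOn_div_sqrt_one_sub_sq continuous_const)
    (fun u hu => one_div_pos.2 (sqrt_pos.2 (by nlinarith [hu.1, hu.2]))) hδ.le hα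
  rw [cpt_eq_div_gapIntegral hδ]
  exact hN.div hD hDpos.ne'

theorem gapIntegral_one_add_div_sqrt {δ α : ℝ} (hδ : 0 ≤ δ) (hα : α ∈ Ioo (δ - 1) (1 - δ)) :
    gapIntegral (fun u => (1 + u) / √(1 - u ^ 2)) δ α =
      gapIntegral (fun u => u / √(1 - u ^ 2)) δ α +
        gapIntegral (fun u => 1 / √(1 - u ^ 2)) δ α := by
  rw [← gapIntegral_add (continuousOn_div_sqrt_one_sub_sq (f := fun u => u) continuous_id')
    (continuousOn_div_sqrt_one_sub_sq (f := fun _ => 1) continuous_const) hδ hα]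
  congr 1; ext u; ring

theorem gapIntegral_one_add_div_sqrt_pow_three {δ α : ℝ} (hδ : 0 ≤ δ)
    (hα : α ∈ Ioo (δ - 1) (1 - δ)) :
    gapIntegral (fun u => (1 + u) / √(1 - u ^ 2) ^ 3) δ α =
      gapIntegral (fun u => 1 / √(1 - u ^ 2) ^ 3) δ α +
        gapIntegral (fun u => u / √(1 - u ^ 2) ^ 3) δ α := by
  rw [← gapIntegral_add (continuousOn_div_sqrt_one_sub_sq_pow (f := fun _ => 1) continuous_const 3)
    (continuousOn_div_sqrt_one_sub_sq_pow (f := fun u => u) continuous_id' 3) hδ hα]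
  congr 1; ext u; ring

section Model

variable {ε : ℝ}

theorem sq_div_two_add_one_sub_cos_bounds {x : ℝ} (hε : 0 ≤ ε) (hx : x ∈ Icc 0 π) :
    (ε + x) ^ 2 / 16 ≤ ε ^ 2 / 2 + (1 - cos x) ∧ ε ^ 2 / 2 + (1 - cos x) ≤ (ε + x) ^ 2 / 2 := by
  have hlow := cos_le_one_sub_mul_cos_sq (abs_le.2 ⟨by linarith [hx.1, pi_pos], hx.2⟩)
  have hup := one_sub_sq_div_two_le_cos (x := x)
  have hπ : 2 / π ^ 2 ≥ 1 / 8 := by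
    rw [ge_iff_le, div_le_div_iff₀ (by norm_num) (by positivity)]
    nlinarith [pi_le_four, pi_pos]
  constructor <;> nlinarith [sq_nonneg (ε - x), mul_nonneg hε hx.1, sq_nonneg x]

theorem integral_inv_const_add_bounds (hε : ε ∈ Ioc 0 (1 / 2)) :
    -log ε ≤ ∫ x in (0:ℝ)..π, (ε + x)⁻¹ ∧ ∫ x in (0:ℝ)..π, (ε + x)⁻¹ ≤ 3 * -log ε := by
  have hε₀ := hε.1
  have hlog2 : log 2 ≤ -log ε := by
    rw [le_neg, ← log_inv]; exact log_le_log hε₀ (by linarith [hε.2])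
  have hlogπ : log (ε + π) ≤ 2 * log 2 := by
    rw [← log_rpow two_pos]
    exact log_le_log (by positivity) (by norm_num; linarith [hε.2, pi_lt_d2])
  have hlogπ' : 0 ≤ log (ε + π) := log_nonneg (by linarith [pi_gt_three])
  rw [integral_comp_add_left (fun x => x⁻¹), add_zero, integral_inv_of_pos hε₀ (by positivity),
    log_div (by positivity) hε₀.ne']
  constructor <;> linarith

theorem integral_inv_const_add_pow_three_bounds (hε : ε ∈ Ioc 0 (1 / 2)) :
    (4 * ε ^ 2)⁻¹ ≤ ∫ x in (0:ℝ)..π, ((ε + x) ^ 3)⁻¹ ∧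
      ∫ x in (0:ℝ)..π, ((ε + x) ^ 3)⁻¹ ≤ (2 * ε ^ 2)⁻¹ := by
  have hzpow : ∀ y : ℝ, (y ^ 3)⁻¹ = y ^ (-3 : ℤ) := fun y => by simp [zpow_neg]
  have h0 : (0 : ℝ) ∉ [[ε, ε + π]] := by
    rw [uIcc_of_le (by linarith [pi_pos])]; exact fun h => hε.1.not_ge h.1
  have hB : ((ε + π) ^ 2)⁻¹ ≤ (2 * ε ^ 2)⁻¹ :=
    inv_anti₀ (by have := hε.1; positivity) (by nlinarith [hε.1, hε.2, pi_gt_three])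
  rw [integral_comp_add_left (fun x => (x ^ 3)⁻¹), add_zero]
  simp only [hzpow]
  rw [integral_zpow (Or.inr ⟨by norm_num, h0⟩)]
  norm_num
  rw [mul_inv] at hB
  constructor <;> nlinarith [inv_nonneg.2 (sq_nonneg (ε + π))]

theorem integral_const_add_bounds (hε : ε ∈ Ioc 0 (1 / 2)) :
    π ^ 2 / 2 ≤ ∫ x in (0:ℝ)..π, (ε + x) ∧ ∫ x in (0:ℝ)..π, (ε + x) ≤ π ^ 2 := by
  have h : ∫ x in (0:ℝ)..π, (ε + x) = π * ε + π ^ 2 / 2 := by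
    rw [integral_comp_add_left (fun x => x), add_zero, integral_id]
    ring
  rw [h]
  constructor <;> nlinarith [hε.1, hε.2, pi_gt_three]

end Model

section Endpoint

variable {δ ε x : ℝ}

theorem sqrt_one_sub_mul_div_four_pos (hδ : δ ∈ Ioo 0 1) : 0 < √((1 - δ) * δ) / 4 := by
  have := mul_pos (sub_pos.2 hδ.2) hδ.1
  positivity

theorem endpoint_mem_Ioo (hδ : δ ∈ Ioo 0 1) (hε : 0 < ε) (hεδ : ε ^ 2 ≤ 1 - δ) :
    -1 + δ * (1 + ε ^ 2 / 2) ∈ Ioo (δ - 1) (1 - δ) := by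
  have := mul_le_of_le_one_left (sq_nonneg ε) hδ.2.le
  constructor <;> nlinarith [hδ.1, mul_pos hδ.1 (pow_pos hε 2)]

theorem one_add_sub_mul_cos_bounds (hδ : 0 < δ) (hε : 0 ≤ ε) (hx : x ∈ Icc 0 π) :
    δ * (ε + x) ^ 2 / 16 ≤ 1 + (-1 + δ * (1 + ε ^ 2 / 2) - δ * cos x) ∧
      1 + (-1 + δ * (1 + ε ^ 2 / 2) - δ * cos x) ≤ δ * (ε + x) ^ 2 / 2 := by
  obtain ⟨h₁, h₂⟩ := sq_div_two_add_one_sub_cos_bounds hε hx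
  constructor <;> nlinarith

theorem sqrt_one_sub_sub_mul_cos_sq_bounds (hδ : δ ∈ Ioo 0 1) (hε : 0 ≤ ε) (hεδ : ε ^ 2 ≤ 1 - δ)
    (hx : x ∈ Icc 0 π) :
    √((1 - δ) * δ) / 4 * (ε + x) ≤ √(1 - (-1 + δ * (1 + ε ^ 2 / 2) - δ * cos x) ^ 2) ∧
      √(1 - (-1 + δ * (1 + ε ^ 2 / 2) - δ * cos x) ^ 2) ≤ √δ * (ε + x) := by
  obtain ⟨h₁, h₂⟩ := one_add_sub_mul_cos_bounds hδ.1 hε hx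
  have hu₁ : 1 - δ ≤ 1 - (-1 + δ * (1 + ε ^ 2 / 2) - δ * cos x) := by
    nlinarith [hδ.1, neg_one_le_cos x, mul_le_of_le_one_left (sq_nonneg ε) hδ.2.le]
  set u := -1 + δ * (1 + ε ^ 2 / 2) - δ * cos x
  have hu₂ : 1 - u ≤ 2 := by nlinarith [mul_nonneg hδ.1.le (sq_nonneg (ε + x))]
  have hfac : 1 - u ^ 2 = (1 - u) * (1 + u) := by ring
  have hεx : 0 ≤ ε + x := add_nonneg hε hx.1
  constructor
  · refine le_sqrt_of_sq_le ?_
    rw [mul_pow, div_pow, sq_sqrt (mul_nonneg (by linarith [hδ.2]) hδ.1.le), hfac]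
    calc (1 - δ) * δ / 4 ^ 2 * (ε + x) ^ 2 = (1 - δ) * (δ * (ε + x) ^ 2 / 16) := by ring
      _ ≤ (1 - u) * (1 + u) := mul_le_mul hu₁ h₁ (by have := hδ.1; positivity) (by linarith [hδ.2])
  · rw [sqrt_le_left (by positivity), mul_pow, sq_sqrt hδ.1.le, hfac]
    calc (1 - u) * (1 + u) ≤ 2 * (δ * (ε + x) ^ 2 / 2) :=
          mul_le_mul hu₂ h₂ (by nlinarith [mul_nonneg hδ.1.le (sq_nonneg (ε + x))]) (by norm_num)
      _ = δ * (ε + x) ^ 2 := by ring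

theorem gapIntegral_inv_sqrt_bounds (hδ : δ ∈ Ioo 0 1) (hε : ε ∈ Ioc 0 (1 / 2))
    (hεδ : ε ^ 2 ≤ 1 - δ) :
    (√δ)⁻¹ * -log ε ≤ gapIntegral (fun u => 1 / √(1 - u ^ 2)) δ (-1 + δ * (1 + ε ^ 2 / 2)) ∧
      gapIntegral (fun u => 1 / √(1 - u ^ 2)) δ (-1 + δ * (1 + ε ^ 2 / 2)) ≤
        3 * (√((1 - δ) * δ) / 4)⁻¹ * -log ε := by
  have hA := sqrt_one_sub_mul_div_four_pos hδ
  have hJ := integral_inv_const_add_bounds hε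
  have hs := integral_sandwich (f := fun x => (ε + x)⁻¹) (c := (√δ)⁻¹)
    (C := (√((1 - δ) * δ) / 4)⁻¹) pi_pos.le
    (ContinuousOn.intervalIntegrable (by
      fun_prop (disch := intro x hx; rw [uIcc_of_le pi_pos.le] at hx; linarith [hx.1, hε.1])))
    (intervalIntegrable_gapIntegrand
      (continuousOn_div_sqrt_one_sub_sq (f := fun _ => 1) continuous_const) hδ.1.le
      (endpoint_mem_Ioo hδ hε.1 hεδ)) fun x hx => by
    obtain ⟨h₁, h₂⟩ := sqrt_one_sub_sub_mul_cos_sq_bounds hδ hε.1.le hεδ hx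
    have ht : 0 < ε + x := by linarith [hε.1, hx.1]
    simp only [← mul_inv, one_div]
    exact ⟨inv_anti₀ (mul_pos hA ht |>.trans_le h₁) h₂, inv_anti₀ (mul_pos hA ht) h₁⟩
  exact ⟨(mul_le_mul_of_nonneg_left hJ.1 (by positivity)).trans hs.1,
    hs.2.trans ((mul_le_mul_of_nonneg_left hJ.2 (inv_nonneg.2 hA.le)).trans_eq (by ring))⟩

theorem gapIntegral_inv_sqrt_pow_three_bounds (hδ : δ ∈ Ioo 0 1) (hε : ε ∈ Ioc 0 (1 / 2))
    (hεδ : ε ^ 2 ≤ 1 - δ) :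
    (√δ ^ 3)⁻¹ / 4 ≤
        ε ^ 2 * gapIntegral (fun u => 1 / √(1 - u ^ 2) ^ 3) δ (-1 + δ * (1 + ε ^ 2 / 2)) ∧
      ε ^ 2 * gapIntegral (fun u => 1 / √(1 - u ^ 2) ^ 3) δ (-1 + δ * (1 + ε ^ 2 / 2)) ≤
        ((√((1 - δ) * δ) / 4) ^ 3)⁻¹ / 2 := by
  have hA := sqrt_one_sub_mul_div_four_pos hδ
  have hε₀ := hε.1
  have hJ := integral_inv_const_add_pow_three_bounds hε
  have hs := integral_sandwich (f := fun x => ((ε + x) ^ 3)⁻¹) (c := (√δ ^ 3)⁻¹)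
    (C := ((√((1 - δ) * δ) / 4) ^ 3)⁻¹) pi_pos.le
    (ContinuousOn.intervalIntegrable (by
      fun_prop (disch := intro x hx; rw [uIcc_of_le pi_pos.le] at hx; have := hx.1; positivity)))
    (intervalIntegrable_gapIntegrand
      (continuousOn_div_sqrt_one_sub_sq_pow (f := fun _ => 1) continuous_const 3) hδ.1.le
      (endpoint_mem_Ioo hδ hε.1 hεδ)) fun x hx => by
    obtain ⟨h₁, h₂⟩ := sqrt_one_sub_sub_mul_cos_sq_bounds hδ hε.1.le hεδ hx
    have ht : 0 < ε + x := by linarith [hx.1]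
    have hσ := mul_pos hA ht
    simp only [← mul_inv, ← mul_pow, one_div]
    exact ⟨inv_anti₀ (pow_pos (hσ.trans_le h₁) 3) (pow_le_pow_left₀ (hσ.trans_le h₁).le h₂ 3),
      inv_anti₀ (pow_pos hσ 3) (pow_le_pow_left₀ hσ.le h₁ 3)⟩
  constructor
  · calc (√δ ^ 3)⁻¹ / 4 = ε ^ 2 * ((√δ ^ 3)⁻¹ * (4 * ε ^ 2)⁻¹) := by field_simp
      _ ≤ _ := mul_le_mul_of_nonneg_left
          ((mul_le_mul_of_nonneg_left hJ.1 (by positivity)).trans hs.1) (sq_nonneg ε)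
  · calc _ ≤ ε ^ 2 * (((√((1 - δ) * δ) / 4) ^ 3)⁻¹ * (2 * ε ^ 2)⁻¹) :=
          mul_le_mul_of_nonneg_left (hs.2.trans (mul_le_mul_of_nonneg_left hJ.2 (by positivity)))
            (sq_nonneg ε)
      _ = _ := by field_simp

theorem gapIntegral_one_add_div_sqrt_bounds (hδ : δ ∈ Ioo 0 1) (hε : ε ∈ Ioc 0 (1 / 2))
    (hεδ : ε ^ 2 ≤ 1 - δ) :
    δ / (16 * √δ) * (π ^ 2 / 2) ≤
        gapIntegral (fun u => (1 + u) / √(1 - u ^ 2)) δ (-1 + δ * (1 + ε ^ 2 / 2)) ∧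
      gapIntegral (fun u => (1 + u) / √(1 - u ^ 2)) δ (-1 + δ * (1 + ε ^ 2 / 2)) ≤
        δ / (2 * (√((1 - δ) * δ) / 4)) * π ^ 2 := by
  have hA := sqrt_one_sub_mul_div_four_pos hδ
  have hδ₀ := hδ.1
  have hJ := integral_const_add_bounds hε
  have hs := integral_sandwich (f := fun x => ε + x) (c := δ / (16 * √δ))
    (C := δ / (2 * (√((1 - δ) * δ) / 4))) pi_pos.le
    (ContinuousOn.intervalIntegrable (by fun_prop))
    (intervalIntegrable_gapIntegrand
      (continuousOn_div_sqrt_one_sub_sq (f := fun u => 1 + u) (by fun_prop)) hδ.1.le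
      (endpoint_mem_Ioo hδ hε.1 hεδ)) fun x hx => by
    obtain ⟨h₁, h₂⟩ := sqrt_one_sub_sub_mul_cos_sq_bounds hδ hε.1.le hεδ hx
    obtain ⟨hw₁, hw₂⟩ := one_add_sub_mul_cos_bounds hδ.1 hε.1.le hx
    have ht : 0 < ε + x := by linarith [hx.1, hε.1]
    have hσ := mul_pos hA ht
    constructor
    · calc δ / (16 * √δ) * (ε + x) = δ * (ε + x) ^ 2 / 16 / (√δ * (ε + x)) := by field_simp
        _ ≤ _ := div_le_div₀ (by linarith [hσ]) hw₁ (hσ.trans_le h₁) h₂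
    · calc _ ≤ δ * (ε + x) ^ 2 / 2 / (√((1 - δ) * δ) / 4 * (ε + x)) :=
            div_le_div₀ (by positivity) hw₂ hσ h₁
        _ = δ / (2 * (√((1 - δ) * δ) / 4)) * (ε + x) := by field_simp
  exact ⟨(mul_le_mul_of_nonneg_left hJ.1 (by positivity)).trans hs.1,
    hs.2.trans (mul_le_mul_of_nonneg_left hJ.2 (by positivity))⟩

theorem gapIntegral_one_add_div_sqrt_pow_three_bounds (hδ : δ ∈ Ioo 0 1)
    (hε : ε ∈ Ioc 0 (1 / 2)) (hεδ : ε ^ 2 ≤ 1 - δ) :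
    0 ≤ gapIntegral (fun u => (1 + u) / √(1 - u ^ 2) ^ 3) δ (-1 + δ * (1 + ε ^ 2 / 2)) ∧
      gapIntegral (fun u => (1 + u) / √(1 - u ^ 2) ^ 3) δ (-1 + δ * (1 + ε ^ 2 / 2)) ≤
        3 * (δ / (2 * (√((1 - δ) * δ) / 4) ^ 3)) * -log ε := by
  have hA := sqrt_one_sub_mul_div_four_pos hδ
  have hδ₀ := hδ.1
  have hJ := integral_inv_const_add_bounds hε
  have hs := integral_sandwich (f := fun x => (ε + x)⁻¹) (c := 0)
    (C := δ / (2 * (√((1 - δ) * δ) / 4) ^ 3)) pi_pos.le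
    (ContinuousOn.intervalIntegrable (by
      fun_prop (disch := intro x hx; rw [uIcc_of_le pi_pos.le] at hx; linarith [hx.1, hε.1])))
    (intervalIntegrable_gapIntegrand
      (continuousOn_div_sqrt_one_sub_sq_pow (f := fun u => 1 + u) (by fun_prop) 3) hδ.1.le
      (endpoint_mem_Ioo hδ hε.1 hεδ)) fun x hx => by
    obtain ⟨h₁, h₂⟩ := sqrt_one_sub_sub_mul_cos_sq_bounds hδ hε.1.le hεδ hx
    obtain ⟨hw₁, hw₂⟩ := one_add_sub_mul_cos_bounds hδ.1 hε.1.le hx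
    have ht : 0 < ε + x := by linarith [hx.1, hε.1]
    have hσ := mul_pos hA ht
    have hw : 0 ≤ 1 + (-1 + δ * (1 + ε ^ 2 / 2) - δ * cos x) := by linarith [hσ]
    constructor
    · rw [zero_mul]; exact div_nonneg hw (pow_nonneg (hσ.le.trans h₁) 3)
    · calc _ ≤ δ * (ε + x) ^ 2 / 2 / (√((1 - δ) * δ) / 4 * (ε + x)) ^ 3 :=
            div_le_div₀ (by positivity) hw₂ (pow_pos hσ 3) (pow_le_pow_left₀ hσ.le h₁ 3)
        _ = δ / (2 * (√((1 - δ) * δ) / 4) ^ 3) * (ε + x)⁻¹ := by field_simp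
  rw [zero_mul] at hs
  exact ⟨hs.1, hs.2.trans ((mul_le_mul_of_nonneg_left hJ.2 (by positivity)).trans_eq (by ring))⟩

end Endpoint

theorem sq_mul_quotient_bounds {D N D' N' ε ℓ d₁ d₂ r₁ r₂ s n₁ n₂ : ℝ} (hℓ : 0 < ℓ)
    (hεℓ : (ε * ℓ) ^ 2 ≤ 1) (hd₁ : 0 < d₁) (hr₁ : 0 < r₁) (hn₁ : 0 < n₁)
    (hD : d₁ * ℓ ≤ D ∧ D ≤ d₂ * ℓ) (hR : r₁ ≤ N + D ∧ N + D ≤ r₂) (hRD : r₂ ≤ d₁ * ℓ)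
    (hS : 0 ≤ N' + D' ∧ N' + D' ≤ s * ℓ) (hN' : n₁ ≤ ε ^ 2 * N' ∧ ε ^ 2 * N' ≤ n₂) :
    r₁ * n₁ / d₂ ^ 2 ≤ (ε * ℓ) ^ 2 * ((N' * D - N * D') / D ^ 2) ∧
      (ε * ℓ) ^ 2 * ((N' * D - N * D') / D ^ 2) ≤ (d₂ * s + r₂ * n₂) / d₁ ^ 2 := by
  have hD₀ : 0 < D := by nlinarith
  have hd₂ : 0 < d₂ := by nlinarith
  have hs : 0 ≤ s := nonneg_of_mul_nonneg_left (hS.1.trans hS.2) hℓ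
  have hgap : 0 ≤ D - (N + D) := by linarith
  have hRN₁ : r₁ * n₁ ≤ (N + D) * (ε ^ 2 * N') := mul_le_mul hR.1 hN'.1 hn₁.le (by linarith)
  have hRN₂ : (N + D) * (ε ^ 2 * N') ≤ r₂ * n₂ :=
    mul_le_mul hR.2 hN'.2 (by linarith) (by linarith)
  have hDS₁ : 0 ≤ ε ^ 2 * ((D - (N + D)) * (N' + D')) := by have := hS.1; positivity
  have hDS₂ : ε ^ 2 * ((D - (N + D)) * (N' + D')) ≤ d₂ * s := by
    calc ε ^ 2 * ((D - (N + D)) * (N' + D')) ≤ ε ^ 2 * ((d₂ * ℓ) * (s * ℓ)) :=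
          mul_le_mul_of_nonneg_left (mul_le_mul (by linarith) hS.2 hS.1 (by positivity))
            (sq_nonneg ε)
      _ = d₂ * s * (ε * ℓ) ^ 2 := by ring
      _ ≤ d₂ * s := mul_le_of_le_one_right (by positivity) hεℓ
  have hP : (ε * ℓ) ^ 2 * (N' * D - N * D') =
      ℓ ^ 2 * ((N + D) * (ε ^ 2 * N') + ε ^ 2 * ((D - (N + D)) * (N' + D'))) := by ring
  rw [mul_div_assoc', hP, le_div_iff₀ (by positivity), div_le_iff₀ (by positivity)]
  constructor
  · calc r₁ * n₁ / d₂ ^ 2 * D ^ 2 ≤ r₁ * n₁ / d₂ ^ 2 * (d₂ * ℓ) ^ 2 :=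
          mul_le_mul_of_nonneg_left (pow_le_pow_left₀ hD₀.le hD.2 2) (by positivity)
      _ = ℓ ^ 2 * (r₁ * n₁) := by field_simp
      _ ≤ _ := mul_le_mul_of_nonneg_left (by linarith) (by positivity)
  · calc _ ≤ ℓ ^ 2 * (d₂ * s + r₂ * n₂) := mul_le_mul_of_nonneg_left (by linarith) (by positivity)
      _ = (d₂ * s + r₂ * n₂) / d₁ ^ 2 * (d₁ * ℓ) ^ 2 := by field_simp
      _ ≤ (d₂ * s + r₂ * n₂) / d₁ ^ 2 * D ^ 2 :=
          mul_le_mul_of_nonneg_left (pow_le_pow_left₀ (by positivity) hD.1 2)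
            (by
              have := hr₁.trans_le (hR.1.trans hR.2)
              have := hn₁.trans_le (hN'.1.trans hN'.2)
              positivity)

theorem eventually_bounds_deriv_cpt {δ : ℝ} (hδ : δ ∈ Ioo 0 1) :
    ∃ C₁ C₂ : ℝ, 0 < C₁ ∧ 0 < C₂ ∧ ∀ᶠ ε in 𝓝[>] 0,
      C₁ ≤ (ε * log ε) ^ 2 * deriv (cpt δ) (-1 + δ * (1 + ε ^ 2 / 2)) ∧
      (ε * log ε) ^ 2 * deriv (cpt δ) (-1 + δ * (1 + ε ^ 2 / 2)) ≤ C₂ := by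
  have hA := sqrt_one_sub_mul_div_four_pos hδ
  obtain ⟨hδ₀, hδ₁⟩ := hδ
  have hd₁ : 0 < (√δ)⁻¹ := by positivity
  refine ⟨δ / (16 * √δ) * (π ^ 2 / 2) * ((√δ ^ 3)⁻¹ / 4) / (3 * (√((1 - δ) * δ) / 4)⁻¹) ^ 2,
    (3 * (√((1 - δ) * δ) / 4)⁻¹ * (3 * (δ / (2 * (√((1 - δ) * δ) / 4) ^ 3))) +
      δ / (2 * (√((1 - δ) * δ) / 4)) * π ^ 2 * (((√((1 - δ) * δ) / 4) ^ 3)⁻¹ / 2)) / (√δ)⁻¹ ^ 2,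
    by positivity, by positivity, ?_⟩
  filter_upwards [Ioo_mem_nhdsGT (lt_min (by norm_num : (0:ℝ) < 1 / 2) (sub_pos.2 hδ₁)),
    -- small enough for the lower bound on `D` to exceed the upper bound on `R = N + D`
    tendsto_log_nhdsGT_zero.eventually
      (eventually_le_atBot (-(δ / (2 * (√((1 - δ) * δ) / 4)) * π ^ 2 / (√δ)⁻¹)))]
    with ε hε hlog
  have hε' : ε ∈ Ioc 0 (1 / 2) := ⟨hε.1, hε.2.le.trans (min_le_left _ _)⟩
  have hεδ : ε ^ 2 ≤ 1 - δ := by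
    nlinarith [hε.1, hε.2.trans_le (min_le_right _ _), hε.2.trans_le (min_le_left _ _)]
  have hα := endpoint_mem_Ioo ⟨hδ₀, hδ₁⟩ hε.1 hεδ
  have hεℓ : (ε * -log ε) ^ 2 ≤ 1 := by
    rw [mul_neg, neg_sq, mul_comm, sq_le_one_iff_abs_le_one]
    exact (abs_log_mul_self_lt ε hε.1 (by linarith [hε'.2])).le
  rw [(hasDerivAt_cpt hδ₀ hα).deriv, show (ε * log ε) ^ 2 = (ε * -log ε) ^ 2 by ring]
  have hR := gapIntegral_one_add_div_sqrt_bounds ⟨hδ₀, hδ₁⟩ hε' hεδ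
  have hS := gapIntegral_one_add_div_sqrt_pow_three_bounds ⟨hδ₀, hδ₁⟩ hε' hεδ
  rw [gapIntegral_one_add_div_sqrt hδ₀.le hα] at hR
  rw [gapIntegral_one_add_div_sqrt_pow_three hδ₀.le hα] at hS
  exact sq_mul_quotient_bounds (neg_pos.2 (log_neg hε.1 (by linarith [hε'.2]))) hεℓ hd₁
    (by positivity) (by positivity) (gapIntegral_inv_sqrt_bounds ⟨hδ₀, hδ₁⟩ hε' hεδ) hR
    ((div_le_iff₀' hd₁).1 (by linarith)) hS
    (gapIntegral_inv_sqrt_pow_three_bounds ⟨hδ₀, hδ₁⟩ hε' hεδ)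

/-- `c'(α(ε)) → +∞` as `ε → 0⁺` at the rate `(ε log ε)^{−2}`,
where `α(ε) = −1 + δ(1 + ε²/2)`. -/
theorem cdot_divergence_rate (δ : ℝ) (hδ : δ ∈ Ioo (0 : ℝ) 1) :
    Tendsto (fun ε : ℝ => deriv (cpt δ) (-1 + δ * (1 + ε^2 / 2)))
      (nhdsWithin 0 (Ioi 0)) atTop ∧
    ∃ C₁ C₂ : ℝ, 0 < C₁ ∧ 0 < C₂ ∧ ∃ ε₀ ∈ Ioo (0 : ℝ) 1, ∀ ε ∈ Ioo (0 : ℝ) ε₀,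
      C₁ ≤ (ε * Real.log ε)^2 * deriv (cpt δ) (-1 + δ * (1 + ε^2 / 2)) ∧
      (ε * Real.log ε)^2 * deriv (cpt δ) (-1 + δ * (1 + ε^2 / 2)) ≤ C₂ := by
  obtain ⟨C₁, C₂, hC₁, hC₂, hbounds⟩ := eventually_bounds_deriv_cpt hδ
  have hpos : ∀ᶠ ε in 𝓝[>] (0 : ℝ), 0 < (ε * log ε) ^ 2 := by
    filter_upwards [Ioo_mem_nhdsGT one_pos] with ε hε
    exact sq_pos_of_neg (mul_neg_of_pos_of_neg hε.1 (log_neg hε.1 hε.2))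
  have hsq : Tendsto (fun ε => (ε * log ε) ^ 2) (𝓝[>] 0) (𝓝[>] 0) :=
    tendsto_nhdsWithin_iff.2 ⟨((continuous_mul_log.pow 2).tendsto' 0 0 (by simp)).mono_left
      nhdsWithin_le_nhds, hpos⟩
  refine ⟨tendsto_atTop_mono' _ ?_ (hsq.inv_tendsto_nhdsGT_zero.const_mul_atTop hC₁), C₁, C₂,
    hC₁, hC₂, ?_⟩
  · filter_upwards [hbounds, hpos] with ε hε hε₀
    rw [Pi.inv_apply, ← div_eq_mul_inv, div_le_iff₀ hε₀, mul_comm]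
    exact hε.1
  · obtain ⟨ε₀, hε₀, hsub⟩ := mem_nhdsGT_iff_exists_Ioo_subset.1 hbounds
    exact ⟨min ε₀ (1 / 2), ⟨lt_min hε₀ one_half_pos, (min_le_right _ _).trans_lt one_half_lt_one⟩,
      fun ε hε => hsub ⟨hε.1, hε.2.trans_le (min_le_left _ _)⟩⟩
end

section
/- Let δ ∈ (0,1), define v(α) = ∫₀^π (1 − (α − δ·cos φ)²)^{−1/2} dφ for α ∈ (δ−1, 1−δ), and set α(ε) = −1 + δ(1 + ε²/2). Then there exist constants C₁, C₂ > 0 and ε₀ ∈ (0,1) such that C₁·log(1/ε) ≤ v(α(ε)) ≤ C₂·log(1/ε) for all ε ∈ (0, ε₀); in particular v(α(ε)) → +∞ as ε → 0⁺. -/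
/-!
For `α = -1 + δ(1 + ε²/2)` the radicand factors as
`1 - (α - δ cos φ)² = δ (1 - cos φ + ε²/2) (2 - δ - δε²/2 + δ cos φ)`.
On `[0, π]` the first factor is comparable to `φ² + ε²` (by `1 - φ²/2 ≤ cos φ ≤ 1 - 2φ²/π²`)
and, once `ε² ≤ 1 - δ`, the second lies in `[1 - δ, 2]`. So `v(α)` is comparable to
`∫₀^π dφ / √(φ² + ε²) = arsinh (π / ε)`, which lies between `log (1/ε)` and `2 log (1/ε)`
for small `ε`.
-/
open MeasureTheory Set Filter Real

/-- The elliptic-type integral `v(α) = ∫₀^π dφ/√(1−(α−δcos φ)²)`. -/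
noncomputable def vInt (δ α : ℝ) : ℝ :=
  ∫ φ in (0 : ℝ)..Real.pi, 1 / Real.sqrt (1 - (α - δ * Real.cos φ)^2)

lemma integral_one_div_sqrt_mul_sq_add_sq {c ε : ℝ} (hc : 0 < c) (hε : 0 < ε) (b : ℝ) :
    ∫ φ in (0 : ℝ)..b, 1 / √(c * (φ ^ 2 + ε ^ 2)) = arsinh (b / ε) / √c := by
  have hderiv : ∀ φ : ℝ, HasDerivAt (fun φ => arsinh (φ / ε) / √c)
      (1 / √(c * (φ ^ 2 + ε ^ 2))) φ := by
    intro φ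
    have hsplit : √(c * (φ ^ 2 + ε ^ 2)) = √c * ε * √(1 + (φ / ε) ^ 2) := by
      rw [show c * (φ ^ 2 + ε ^ 2) = (√c * ε) ^ 2 * (1 + (φ / ε) ^ 2) by
        rw [mul_pow, sq_sqrt hc.le]; field_simp; ring,
        sqrt_mul (sq_nonneg _), sqrt_sq (by positivity)]
    refine ((((hasDerivAt_id φ).div_const ε).arsinh).div_const √c).congr_deriv ?_
    rw [hsplit]
    simp only [id, smul_eq_mul]
    field_simp
  rw [intervalIntegral.integral_eq_sub_of_hasDerivAt (fun φ _ => hderiv φ)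
    ((continuous_const.div (by fun_prop) fun φ => by positivity).intervalIntegrable _ _)]
  simp

lemma arsinh_le_log_two_mul_add_one {x : ℝ} (hx : 0 ≤ x) : arsinh x ≤ log (2 * x + 1) := by
  refine log_le_log (by positivity) ?_
  have : √(1 + x ^ 2) ≤ x + 1 := (sqrt_le_left (by positivity)).2 (by nlinarith)
  linarith

lemma log_le_arsinh {x : ℝ} (hx : 0 < x) : log x ≤ arsinh x :=
  log_le_log hx (le_add_of_nonneg_right (sqrt_nonneg _))

lemma integral_one_div_sqrt_le_of_le {f g : ℝ → ℝ} {a b : ℝ} (hab : a ≤ b)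
    (hf : ContinuousOn f (Icc a b)) (hg : ContinuousOn g (Icc a b))
    (hf0 : ∀ x ∈ Icc a b, 0 < f x) (hfg : ∀ x ∈ Icc a b, f x ≤ g x) :
    ∫ x in a..b, 1 / √(g x) ≤ ∫ x in a..b, 1 / √(f x) := by
  have hint : ∀ h : ℝ → ℝ, ContinuousOn h (Icc a b) → (∀ x ∈ Icc a b, 0 < h x) →
      IntervalIntegrable (fun x => 1 / √(h x)) volume a b := fun h hc hpos => by
    refine ContinuousOn.intervalIntegrable ?_
    rw [uIcc_of_le hab]
    exact continuousOn_const.div hc.sqrt fun x hx => (sqrt_pos.2 (hpos x hx)).ne'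
  refine intervalIntegral.integral_mono_on hab
    (hint g hg fun x hx => (hf0 x hx).trans_le (hfg x hx)) (hint f hf hf0) fun x hx => ?_
  exact one_div_le_one_div_of_le (sqrt_pos.2 (hf0 x hx)) (sqrt_le_sqrt (hfg x hx))

lemma one_sub_sq_alpha_eq (δ ε φ : ℝ) :
    1 - (-1 + δ * (1 + ε ^ 2 / 2) - δ * cos φ) ^ 2
      = δ * (1 - cos φ + ε ^ 2 / 2) * (2 - δ - δ * ε ^ 2 / 2 + δ * cos φ) := by
  ring

lemma one_sub_sq_alpha_le {δ : ℝ} (hδ : 0 ≤ δ) (ε φ : ℝ) :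
    1 - (-1 + δ * (1 + ε ^ 2 / 2) - δ * cos φ) ^ 2 ≤ δ * (φ ^ 2 + ε ^ 2) := by
  have hnear : 1 - cos φ + ε ^ 2 / 2 ≤ (φ ^ 2 + ε ^ 2) / 2 := by
    linarith [one_sub_sq_div_two_le_cos (x := φ)]
  rw [one_sub_sq_alpha_eq]
  calc δ * (1 - cos φ + ε ^ 2 / 2) * (2 - δ - δ * ε ^ 2 / 2 + δ * cos φ)
      = δ * ((1 - cos φ + ε ^ 2 / 2) * (2 - δ - δ * ε ^ 2 / 2 + δ * cos φ)) := by ring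
    _ ≤ δ * ((1 - cos φ + ε ^ 2 / 2) * 2) := by
        gcongr <;> nlinarith [cos_le_one φ, sq_nonneg ε]
    _ ≤ δ * (φ ^ 2 + ε ^ 2) := by gcongr; linarith

lemma le_one_sub_sq_alpha {δ ε φ : ℝ} (hδ : δ ∈ Icc (0 : ℝ) 1) (hε : ε ^ 2 ≤ 1 - δ)
    (hφ : |φ| ≤ π) :
    δ * (1 - δ) * (2 / π ^ 2) * (φ ^ 2 + ε ^ 2)
      ≤ 1 - (-1 + δ * (1 + ε ^ 2 / 2) - δ * cos φ) ^ 2 := by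
  obtain ⟨hδ0, hδ1⟩ := hδ
  have hπ : 2 / π ^ 2 ≤ 1 / 2 := by
    rw [div_le_div_iff₀ (by positivity) (by norm_num)]; nlinarith [two_le_pi]
  have hfar : 2 / π ^ 2 * (φ ^ 2 + ε ^ 2) ≤ 1 - cos φ + ε ^ 2 / 2 := by
    nlinarith [cos_le_one_sub_mul_cos_sq hφ, sq_nonneg ε]
  have hsecond : 1 - δ ≤ 2 - δ - δ * ε ^ 2 / 2 + δ * cos φ := by
    nlinarith [neg_one_le_cos φ, sq_nonneg ε]
  rw [one_sub_sq_alpha_eq]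
  calc δ * (1 - δ) * (2 / π ^ 2) * (φ ^ 2 + ε ^ 2)
      = δ * (2 / π ^ 2 * (φ ^ 2 + ε ^ 2)) * (1 - δ) := by ring
    _ ≤ _ := by
        gcongr
        · nlinarith [cos_le_one φ, sq_nonneg ε]

lemma log_one_div_le_arsinh_pi_div {ε : ℝ} (hε : 0 < ε) : log (1 / ε) ≤ arsinh (π / ε) :=
  (log_le_log (by positivity) (by gcongr; linarith [two_le_pi])).trans
    (log_le_arsinh (by positivity))

lemma arsinh_pi_div_le_two_mul_log {ε : ℝ} (hε : 0 < ε) (hε8 : ε ≤ 1 / 8) :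
    arsinh (π / ε) ≤ 2 * log (1 / ε) := by
  have hsmall : 2 * (π / ε) + 1 ≤ (1 / ε) ^ 2 := by
    rw [div_pow, one_pow, le_div_iff₀ (by positivity)]
    field_simp
    nlinarith [pi_lt_d2]
  calc arsinh (π / ε) ≤ log (2 * (π / ε) + 1) := arsinh_le_log_two_mul_add_one (by positivity)
    _ ≤ log ((1 / ε) ^ 2) := log_le_log (by positivity) hsmall
    _ = 2 * log (1 / ε) := by rw [log_pow]; norm_num

lemma mul_one_sub_mul_two_div_sq_pi_pos {δ : ℝ} (hδ : δ ∈ Ioo (0 : ℝ) 1) :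
    0 < δ * (1 - δ) * (2 / π ^ 2) := by
  have := pi_pos; have := hδ.1; have : 0 < 1 - δ := by linarith [hδ.2]
  positivity

lemma vInt_alpha_mem_Icc {δ ε : ℝ} (hδ : δ ∈ Ioo (0 : ℝ) 1) (hε : 0 < ε) (hεδ : ε ^ 2 ≤ 1 - δ) :
    vInt δ (-1 + δ * (1 + ε ^ 2 / 2)) ∈
      Icc (arsinh (π / ε) / √δ) (arsinh (π / ε) / √(δ * (1 - δ) * (2 / π ^ 2))) := by
  have hK := mul_one_sub_mul_two_div_sq_pi_pos hδ
  obtain ⟨hδ0, hδ1⟩ := hδ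
  have habs : ∀ φ ∈ Icc 0 π, |φ| ≤ π := fun φ hφ => abs_le.2 ⟨by linarith [hφ.1, pi_pos], hφ.2⟩
  have hlower : ∀ φ ∈ Icc 0 π, δ * (1 - δ) * (2 / π ^ 2) * (φ ^ 2 + ε ^ 2)
      ≤ 1 - (-1 + δ * (1 + ε ^ 2 / 2) - δ * cos φ) ^ 2 := fun φ hφ =>
    le_one_sub_sq_alpha ⟨hδ0.le, hδ1.le⟩ hεδ (habs φ hφ)
  have hcont : ContinuousOn (fun φ => 1 - (-1 + δ * (1 + ε ^ 2 / 2) - δ * cos φ) ^ 2)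
      (Icc 0 π) := by fun_prop
  have hmodel : ∀ c > 0, ∫ φ in (0 : ℝ)..π, 1 / √(c * (φ ^ 2 + ε ^ 2))
      = arsinh (π / ε) / √c := fun c hc => integral_one_div_sqrt_mul_sq_add_sq hc hε π
  constructor
  · rw [← hmodel δ hδ0]
    exact integral_one_div_sqrt_le_of_le pi_pos.le hcont (by fun_prop)
      (fun φ hφ => (by positivity : (0 : ℝ) < _).trans_le (hlower φ hφ))
      fun φ _ => one_sub_sq_alpha_le hδ0.le ε φ
  · rw [← hmodel _ hK]
    exact integral_one_div_sqrt_le_of_le pi_pos.le (by fun_prop) hcont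
      (fun φ _ => by positivity) hlower

lemma vInt_alpha_log_bounds {δ ε : ℝ} (hδ : δ ∈ Ioo (0 : ℝ) 1) (hε : 0 < ε) (hε8 : ε ≤ 1 / 8)
    (hεδ : ε ^ 2 ≤ 1 - δ) :
    1 / √δ * log (1 / ε) ≤ vInt δ (-1 + δ * (1 + ε ^ 2 / 2)) ∧
      vInt δ (-1 + δ * (1 + ε ^ 2 / 2)) ≤ 2 / √(δ * (1 - δ) * (2 / π ^ 2)) * log (1 / ε) := by
  obtain ⟨hlo, hhi⟩ := vInt_alpha_mem_Icc hδ hε hεδ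
  constructor
  · calc 1 / √δ * log (1 / ε) ≤ arsinh (π / ε) / √δ := by
          rw [one_div_mul_eq_div]
          gcongr
          exact log_one_div_le_arsinh_pi_div hε
      _ ≤ _ := hlo
  · calc _ ≤ arsinh (π / ε) / √(δ * (1 - δ) * (2 / π ^ 2)) := hhi
      _ ≤ _ := by
          rw [div_mul_eq_mul_div]
          gcongr
          exact arsinh_pi_div_le_two_mul_log hε hε8

/-- `v(α(ε)) ≍ log(1/ε)` as `ε → 0⁺`, where `α(ε) = −1 + δ(1+ε²/2)`;
in particular `v(α(ε)) → +∞`. -/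
theorem v_integral_log_rate (δ : ℝ) (hδ : δ ∈ Ioo (0 : ℝ) 1) :
    (∃ C₁ C₂ : ℝ, 0 < C₁ ∧ 0 < C₂ ∧ ∃ ε₀ ∈ Ioo (0 : ℝ) 1, ∀ ε ∈ Ioo (0 : ℝ) ε₀,
      C₁ * Real.log (1 / ε) ≤ vInt δ (-1 + δ * (1 + ε^2 / 2)) ∧
      vInt δ (-1 + δ * (1 + ε^2 / 2)) ≤ C₂ * Real.log (1 / ε)) ∧
    Tendsto (fun ε : ℝ => vInt δ (-1 + δ * (1 + ε^2 / 2)))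
      (nhdsWithin 0 (Ioi 0)) atTop := by
  have hδ0 := hδ.1
  have hK := mul_one_sub_mul_two_div_sq_pi_pos hδ
  set ε₀ := min (1 / 8) √(1 - δ)
  have hε₀ : 0 < ε₀ := lt_min (by norm_num) (sqrt_pos.2 (by linarith [hδ.2]))
  have hbounds : ∀ ε ∈ Ioo 0 ε₀, _ := fun ε ⟨hε, hεε₀⟩ =>
    vInt_alpha_log_bounds hδ hε (hεε₀.trans_le (min_le_left _ _)).le
      (by nlinarith [(hεε₀.trans_le (min_le_right _ _)), sq_sqrt (by linarith [hδ.2] : 0 ≤ 1 - δ)])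
  refine ⟨⟨_, _, by positivity, by positivity, ε₀,
    ⟨hε₀, (min_le_left _ _).trans_lt (by norm_num)⟩, hbounds⟩, ?_⟩
  have hlog : Tendsto (fun ε : ℝ => 1 / √δ * log (1 / ε)) (nhdsWithin 0 (Ioi 0)) atTop := by
    refine Tendsto.const_mul_atTop (by positivity) ?_
    simpa only [one_div, Function.comp_def] using tendsto_log_atTop.comp tendsto_inv_nhdsGT_zero
  refine tendsto_atTop_mono' _ ?_ hlog
  filter_upwards [Ioo_mem_nhdsGT hε₀] with ε hε using (hbounds ε hε).1
end
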